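/- arXiv:2312.03980 — 9 statements merged into one kernel-verified Lean document; each statement's English description precedes it below -/
import Mathlib

section
/- Let X and Z be T₀-spaces and let π : X → Z be continuous, surjective, and open. For open sets U, V ⊆ X, the image of R_π ∩ (U × V) under the first coordinate projection equals U ∩ π⁻¹(π(V)); consequently π is pseudo-open and pseudo-epimorphic. -/
open Set

/-- The pseudo-graph of a continuous map `π : X → Z`:
`R_π = {(x, y) : π y ∈ closure {π x}}`. -/
def pseudoGraph {X Z : Type*} [TopologicalSpace Z] (π : X → Z) : Set (X × X) :=
  {p : X × X | π p.2 ∈ closure {π p.1}}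

/-- Let `π : X → Z` be a continuous, surjective, open map of T₀-spaces. For open
`U, V ⊆ X`, the first-coordinate image of `R_π ∩ (U ×ˢ V)` equals
`U ∩ π⁻¹(π(V))`; consequently `π` is pseudo-open (the projection `R_π → X` is open
and images of `R_π`-invariant open sets are open in `π(X)`) and pseudo-epimorphic
(for every closed `F ⊆ Z`, `π(X) ∩ F` is dense in `F`). -/
theorem pseudoOpen_pseudoEpimorphic_of_open_surjective
    {X Z : Type*} [TopologicalSpace X] [TopologicalSpace Z] [T0Space X] [T0Space Z]
    (π : X → Z) (hcont : Continuous π) (hsurj : Function.Surjective π)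
    (hopen : IsOpenMap π) :
    (∀ U V : Set X, IsOpen U → IsOpen V →
      Prod.fst '' (pseudoGraph π ∩ U ×ˢ V) = U ∩ π ⁻¹' (π '' V)) ∧
    (∀ W : Set (X × X), IsOpen W → IsOpen (Prod.fst '' (pseudoGraph π ∩ W))) ∧
    (∀ U : Set X, IsOpen U →
      (∀ x y : X, (x, y) ∈ pseudoGraph π → y ∈ U → x ∈ U) →
      ∃ V : Set Z, IsOpen V ∧ π '' U = V ∩ range π) ∧
    (∀ F : Set Z, IsClosed F → F ⊆ closure (range π ∩ F)) := by
  have key : ∀ U V : Set X, IsOpen U → IsOpen V →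
      Prod.fst '' (pseudoGraph π ∩ U ×ˢ V) = U ∩ π ⁻¹' (π '' V) := by
    intro U V hU hV
    ext x
    constructor
    · rintro ⟨⟨a, y⟩, ⟨hR, ha, hy⟩, rfl⟩
      refine ⟨ha, ?_⟩
      -- π y ∈ closure {π a}, π '' V open containing π y, so π a ∈ π '' V
      have hVy : π y ∈ π '' V := ⟨y, hy, rfl⟩
      have := hR
      simp only [pseudoGraph, Set.mem_setOf_eq] at this
      have h := mem_closure_iff.mp this (π '' V) (hopen V hV) hVy
      rcases h with ⟨z, hz, hz'⟩
      rwa [Set.mem_singleton_iff.mp hz'] at hz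
    · rintro ⟨hxU, y, hyV, hxy⟩
      exact ⟨(x, y), ⟨by simp only [pseudoGraph, Set.mem_setOf_eq, hxy]; exact subset_closure rfl, hxU, hyV⟩, rfl⟩
  refine ⟨key, ?_, ?_, ?_⟩
  · intro W hW
    rw [isOpen_iff_forall_mem_open]
    rintro x ⟨⟨a, y⟩, ⟨hR, hxy⟩, rfl⟩
    obtain ⟨U, V, hU, hV, haU, hyV, hUV⟩ := isOpen_prod_iff.mp hW a y hxy
    refine ⟨U ∩ π ⁻¹' (π '' V), ?_, ?_, ?_⟩
    · rw [← key U V hU hV]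
      rintro x' ⟨⟨a', y'⟩, ⟨hR', ha', hy'⟩, rfl⟩
      exact ⟨(a', y'), ⟨hR', hUV ⟨ha', hy'⟩⟩, rfl⟩
    · exact hU.inter ((hopen V hV).preimage hcont)
    · rw [← key U V hU hV]
      exact ⟨(a, y), ⟨hR, haU, hyV⟩, rfl⟩
  · intro U hU _
    exact ⟨π '' U, hopen U hU, by
      ext z; constructor
      · rintro ⟨u, hu, rfl⟩; exact ⟨⟨u, hu, rfl⟩, u, rfl⟩
      · rintro ⟨hz, _⟩; exact hz⟩
  · intro F hF
    rw [hsurj.range_eq, Set.univ_inter, hF.closure_eq]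
end

section
/- Let P be a noncompact second countable locally compact Hausdorff space with a pseudocovering (Y, Z, ρ, h, q). Then Z \ h(Y) is dense in Z. -/
open Set

/-- Let `P` be a noncompact second countable locally compact Hausdorff space with a
pseudocovering `(Y, Z, ρ, h, q)`: `Y` is second countable locally compact Hausdorff,
`(Z, ρ)` is a compact metric space, `h : Y → Z` is injective continuous,
`q : Y → P` is a proper open continuous surjection, and for every `ε > 0` there is a
compact `K ⊆ P` such that `h(q⁻¹(x))` is `ε`-dense in `Z` for all `x ∈ P \ K`.
Then `Z \ h(Y)` is dense in `Z`. -/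
theorem pseudocovering_complement_dense
    {P Y Z : Type*}
    [TopologicalSpace P] [T2Space P] [LocallyCompactSpace P]
    [SecondCountableTopology P] [NoncompactSpace P]
    [TopologicalSpace Y] [T2Space Y] [LocallyCompactSpace Y]
    [SecondCountableTopology Y]
    [MetricSpace Z] [CompactSpace Z]
    (h : Y → Z) (hinj : Function.Injective h) (hcont : Continuous h)
    (q : Y → P) (qcont : Continuous q) (qsurj : Function.Surjective q)
    (qopen : IsOpenMap q)
    (qproper : ∀ K : Set P, IsCompact K → IsCompact (q ⁻¹' K))
    (hdense : ∀ ε : ℝ, 0 < ε → ∃ K : Set P, IsCompact K ∧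
      ∀ x : P, x ∉ K → ∀ z : Z, ∃ y : Y, q y = x ∧ dist (h y) z ≤ ε) :
    Dense (range h)ᶜ := by
  by_contra hd
  rw [Metric.dense_iff] at hd
  push_neg at hd
  obtain ⟨z₀, ε, εpos, hball⟩ := hd
  -- the ball around z₀ of radius ε is contained in the range of h
  have hsub : Metric.ball z₀ ε ⊆ range h := by
    intro z hz
    by_contra hzr
    exact eq_empty_iff_forall_notMem.1 hball z ⟨hz, hzr⟩
  -- Baire category: some compact piece of Y has image with nonempty interior
  have : SigmaCompactSpace Y := inferInstance
  set C : ℕ → Set Y := compactCovering Y with hC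
  have hCcomp : ∀ n, IsCompact (C n) := isCompact_compactCovering Y
  set F : ℕ → Set Z := fun n => h '' C n ∪ (Metric.ball z₀ ε)ᶜ with hF
  have hFclosed : ∀ n, IsClosed (F n) :=
    fun n => ((hCcomp n).image hcont).isClosed.union Metric.isOpen_ball.isClosed_compl
  have hFcover : ⋃ n, F n = univ := by
    apply eq_univ_of_forall
    intro z
    by_cases hz : z ∈ Metric.ball z₀ ε
    · obtain ⟨y, hy⟩ := hsub hz
      obtain ⟨n, hn⟩ : ∃ n, y ∈ C n := by
        have := iUnion_compactCovering Y
        have : y ∈ ⋃ n, C n := by rw [hC, this]; trivial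
        simpa using this
      exact mem_iUnion.2 ⟨n, Or.inl ⟨y, hn, hy⟩⟩
    · exact mem_iUnion.2 ⟨0, Or.inr hz⟩
  have hBaire := dense_iUnion_interior_of_closed hFclosed hFcover
  obtain ⟨w, hw, n, hwn⟩ : ∃ w ∈ Metric.ball z₀ (ε/2), ∃ n, w ∈ interior (F n) := by
    obtain ⟨w, hw1, hw2⟩ := hBaire.inter_open_nonempty (Metric.ball z₀ (ε/2))
      Metric.isOpen_ball ⟨z₀, Metric.mem_ball_self (by linarith)⟩
    exact ⟨w, hw1, by simpa using hw2⟩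
  obtain ⟨r, rpos, hr⟩ := Metric.isOpen_iff.1 isOpen_interior w hwn
  -- shrink r so that ball w r ⊆ ball z₀ ε
  set r' : ℝ := min r (ε/2) with hr'
  have r'pos : 0 < r' := lt_min rpos (by linarith)
  have hball_sub : Metric.ball w r' ⊆ h '' C n := by
    intro z hz
    have hz1 : z ∈ F n := interior_subset (hr (Metric.ball_subset_ball (min_le_left _ _) hz))
    have hz2 : z ∈ Metric.ball z₀ ε := by
      have d1 : dist z w < ε/2 := lt_of_lt_of_le hz (min_le_right _ _)
      have d2 : dist w z₀ < ε/2 := hw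
      have := dist_triangle z w z₀
      simp only [Metric.mem_ball] at *
      linarith
    rcases hz1 with h1 | h1
    · exact h1
    · exact absurd hz2 h1
  -- the compact set A and its image under q
  set A : Set Y := C n ∩ h ⁻¹' (Metric.closedBall w (r'/2)) with hA
  have hAcomp : IsCompact A :=
    (hCcomp n).inter_right (Metric.isClosed_closedBall.preimage hcont)
  have hqA : IsCompact (q '' A) := hAcomp.image qcont
  obtain ⟨K, hK, hKprop⟩ := hdense (r'/4) (by linarith)
  obtain ⟨x, hx⟩ : ∃ x, x ∉ K ∪ q '' A :=
    (ne_univ_iff_exists_notMem _).1 (hK.union hqA).ne_univ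
  obtain ⟨y, hqy, hdy⟩ := hKprop x (fun hxK => hx (Or.inl hxK)) w
  -- h y lands in the ball, hence in h '' C n, hence y ∈ C n by injectivity
  have hyball : h y ∈ Metric.ball w r' := by
    rw [Metric.mem_ball]
    calc dist (h y) w ≤ r'/4 := hdy
    _ < r' := by linarith
  obtain ⟨c, hc, hch⟩ := hball_sub hyball
  have hyc : y = c := hinj hch.symm
  have hyA : y ∈ A := by
    refine ⟨hyc ▸ hc, ?_⟩
    simp only [mem_preimage, Metric.mem_closedBall]
    calc dist (h y) w ≤ r'/4 := hdy
    _ ≤ r'/2 := by linarith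
  exact hx (Or.inr ⟨y, hyA, hqy⟩)
end

section
/- Let P be a noncompact second countable locally compact Hausdorff space with a pseudocovering (Y, Z, ρ, h, q). Define π : Z → Ξ(P) by π(z) = q(y) if z = h(y) for some (necessarily unique) y ∈ Y, and π(z) = ∞ if z ∉ h(Y). Then π is surjective, continuous, and open. -/
open Set

/-- The open sets of `Ξ(P) = P ∪ {∞}` (modelled as `Option P`, `none = ∞`):
the whole space, the empty set, and complements of compact subsets of `P`. -/
def XiIsOpen (P : Type*) [TopologicalSpace P] (U : Set (Option P)) : Prop :=
  U = Set.univ ∨ U = ∅ ∨ ∃ K : Set P, IsCompact K ∧ U = (Option.some '' K)ᶜ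

/-- Key auxiliary fact: the complement of `range h` meets every nonempty open
subset of `Z` (Baire category argument). -/
lemma pseudocovering_compl_range_dense {P Y Z : Type*}
    [TopologicalSpace P] [NoncompactSpace P]
    [TopologicalSpace Y] [T2Space Y] [LocallyCompactSpace Y]
    [SecondCountableTopology Y]
    [MetricSpace Z] [CompactSpace Z]
    (h : Y → Z) (hinj : Function.Injective h) (hcont : Continuous h)
    (q : Y → P) (qcont : Continuous q)
    (hdense : ∀ ε : ℝ, 0 < ε → ∃ K : Set P, IsCompact K ∧
      ∀ x : P, x ∉ K → ∀ z : Z, ∃ y : Y, q y = x ∧ dist (h y) z ≤ ε)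
    {V : Set Z} (hV : IsOpen V) (hVne : V.Nonempty) :
    ∃ z ∈ V, z ∉ range h := by
  by_contra hcon
  push_neg at hcon
  haveI : LocallyCompactSpace V := hV.locallyCompactSpace
  haveI : Nonempty V := hVne.to_subtype
  obtain ⟨n, z₁, hz₁⟩ := nonempty_interior_of_iUnion_of_closed
    (X := V) (f := fun n : ℕ => (Subtype.val : V → Z) ⁻¹' (h '' compactCovering Y n))
    (fun n => (((isCompact_compactCovering Y n).image hcont).isClosed).preimage
      continuous_subtype_val)
    (by
      ext z
      simp only [mem_iUnion, mem_preimage, mem_univ, iff_true]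
      obtain ⟨y, hy⟩ := hcon z.1 z.2
      obtain ⟨n, hn⟩ := exists_mem_compactCovering y
      exact ⟨n, y, hn, hy⟩)
  -- transfer the interior point to an open ball in `Z`
  rw [mem_interior] at hz₁
  obtain ⟨t, ht, htopen, hz₁t⟩ := hz₁
  obtain ⟨u, huopen, hu⟩ := isOpen_induced_iff.mp htopen
  have huV : IsOpen (u ∩ V) := huopen.inter hV
  have hz₁uV : (z₁ : Z) ∈ u ∩ V := by
    refine ⟨?_, z₁.2⟩
    have : z₁ ∈ (Subtype.val : V → Z) ⁻¹' u := by rw [hu]; exact hz₁t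
    exact this
  have huVsub : u ∩ V ⊆ h '' compactCovering Y n := by
    rintro w ⟨hwu, hwV⟩
    have : (⟨w, hwV⟩ : V) ∈ t := by rw [← hu]; exact hwu
    exact ht this
  obtain ⟨s, hs, hball⟩ := Metric.isOpen_iff.mp huV _ hz₁uV
  obtain ⟨K₀, hK₀, hK₀d⟩ := hdense (s / 2) (by linarith)
  -- a point outside the compact set `K₀ ∪ q '' (compactCovering Y n)`
  have hcomp : IsCompact (K₀ ∪ q '' compactCovering Y n) :=
    hK₀.union ((isCompact_compactCovering Y n).image qcont)
  obtain ⟨x, hx⟩ : ∃ x, x ∉ K₀ ∪ q '' compactCovering Y n := by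
    by_contra hx
    push_neg at hx
    exact hcomp.ne_univ (eq_univ_of_forall hx)
  obtain ⟨y, hqy, hdy⟩ := hK₀d x (fun hxK => hx (Or.inl hxK)) (z₁ : Z)
  have : h y ∈ u ∩ V := hball (by
    simp only [Metric.mem_ball]
    calc dist (h y) (z₁ : Z) ≤ s / 2 := hdy
      _ < s := by linarith)
  obtain ⟨c, hc, hcy⟩ := huVsub this
  exact hx (Or.inr ⟨c, hc, by rw [← hqy, hinj hcy]⟩)

/-- Let `(Y, Z, ρ, h, q)` be a pseudocovering of a noncompact second countable
locally compact Hausdorff space `P`, and define `π : Z → Ξ(P)` by `π (h y) = q y`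
and `π z = ∞` for `z ∉ h(Y)`. Then `π` is surjective, continuous, and open. -/
theorem pseudocovering_map_to_xi
    {P Y Z : Type*}
    [TopologicalSpace P] [T2Space P] [LocallyCompactSpace P]
    [SecondCountableTopology P] [NoncompactSpace P]
    [TopologicalSpace Y] [T2Space Y] [LocallyCompactSpace Y]
    [SecondCountableTopology Y]
    [MetricSpace Z] [CompactSpace Z]
    (h : Y → Z) (hinj : Function.Injective h) (hcont : Continuous h)
    (q : Y → P) (qcont : Continuous q) (qsurj : Function.Surjective q)
    (qopen : IsOpenMap q)
    (qproper : ∀ K : Set P, IsCompact K → IsCompact (q ⁻¹' K))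
    (hdense : ∀ ε : ℝ, 0 < ε → ∃ K : Set P, IsCompact K ∧
      ∀ x : P, x ∉ K → ∀ z : Z, ∃ y : Y, q y = x ∧ dist (h y) z ≤ ε)
    (τ : TopologicalSpace (Option P))
    (hτ : ∀ U : Set (Option P), @IsOpen (Option P) τ U ↔ XiIsOpen P U)
    (π : Z → Option P)
    (hπh : ∀ y : Y, π (h y) = Option.some (q y))
    (hπinfty : ∀ z : Z, z ∉ range h → π z = none) :
    Function.Surjective π ∧ @Continuous Z (Option P) _ τ π ∧
      @IsOpenMap Z (Option P) _ τ π := by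
  -- characterization of `π z = some x`
  have keymem : ∀ (z : Z) (x : P), π z = Option.some x ↔ ∃ y, h y = z ∧ q y = x := by
    intro z x
    constructor
    · intro hz
      by_cases hzr : z ∈ range h
      · obtain ⟨y, hy⟩ := hzr
        refine ⟨y, hy, ?_⟩
        have := hπh y
        rw [hy, hz] at this
        exact (Option.some_injective P this).symm
      · rw [hπinfty z hzr] at hz; exact absurd hz (by simp)
    · rintro ⟨y, rfl, rfl⟩
      exact hπh y
  -- `Z` is nonempty
  have hPne : Nonempty P := by
    by_contra hn
    exact noncompact_univ P (by
      rw [not_nonempty_iff] at hn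
      simp [Set.univ_eq_empty_iff.mpr hn])
  obtain ⟨x₀⟩ := hPne
  obtain ⟨y₀, hy₀⟩ := qsurj x₀
  -- Surjectivity
  have hsurj : Function.Surjective π := by
    rintro (_ | x)
    · obtain ⟨z, -, hz⟩ := pseudocovering_compl_range_dense h hinj hcont q qcont hdense
        isOpen_univ ⟨h y₀, mem_univ _⟩
      exact ⟨z, hπinfty z hz⟩
    · obtain ⟨y, rfl⟩ := qsurj x
      exact ⟨h y, hπh y⟩
  refine ⟨hsurj, ?_, ?_⟩
  -- Continuity
  · rw [continuous_def]
    intro U hU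
    rw [hτ] at hU
    rcases hU with rfl | rfl | ⟨K, hK, rfl⟩
    · simp
    · simp
    · have hpre : π ⁻¹' (Option.some '' K)ᶜ = (h '' (q ⁻¹' K))ᶜ := by
        ext z
        simp only [mem_preimage, mem_compl_iff, mem_image]
        constructor
        · intro hz ⟨y, hyK, hyz⟩
          exact hz ⟨q y, hyK, ((keymem z (q y)).mpr ⟨y, hyz, rfl⟩).symm⟩
        · rintro hz ⟨x, hxK, hxz⟩
          obtain ⟨y, hyz, rfl⟩ := (keymem z x).mp hxz.symm
          exact hz ⟨y, hxK, hyz⟩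
      rw [hpre]
      exact (((qproper K hK).image hcont).isClosed).isOpen_compl
  -- Openness
  · intro V hVopen
    rw [hτ]
    rcases eq_empty_or_nonempty V with rfl | hVne
    · right; left; simp
    · right; right
      refine ⟨(q '' (h ⁻¹' V))ᶜ, ?_, ?_⟩
      · -- compactness: closed and contained in a compact set
        obtain ⟨z₀, hz₀⟩ := hVne
        obtain ⟨s, hs, hball⟩ := Metric.isOpen_iff.mp hVopen _ hz₀
        obtain ⟨K₀, hK₀, hK₀d⟩ := hdense (s / 2) (by linarith)
        refine hK₀.of_isClosed_subset (qopen _ (hVopen.preimage hcont)).isClosed_compl ?_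
        intro x hx
        by_contra hxK
        obtain ⟨y, hqy, hdy⟩ := hK₀d x hxK z₀
        exact hx ⟨y, hball (by simp only [Metric.mem_ball]; linarith), hqy⟩
      · -- the image identity
        ext u
        rcases u with _ | x
        · refine ⟨fun _ => by simp, fun _ => ?_⟩
          obtain ⟨z, hzV, hz⟩ := pseudocovering_compl_range_dense h hinj hcont q qcont
            hdense hVopen hVne
          exact ⟨z, hzV, hπinfty z hz⟩
        · have h1 : Option.some x ∈ π '' V ↔ x ∈ q '' (h ⁻¹' V) := by
            constructor
            · rintro ⟨z, hzV, hz⟩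
              obtain ⟨y, hyz, rfl⟩ := (keymem z x).mp hz
              exact ⟨y, by rwa [mem_preimage, hyz], rfl⟩
            · rintro ⟨y, hyV, rfl⟩
              exact ⟨h y, hyV, hπh y⟩
          have h2 : Option.some x ∈ (Option.some '' (q '' (h ⁻¹' V))ᶜ)ᶜ ↔
              x ∈ q '' (h ⁻¹' V) := by
            simp [(Option.some_injective P).mem_set_image]
          rw [h1, h2]
end

section
/- Let P₀ and P be noncompact second countable locally compact Hausdorff spaces, let (Y₀, Z, ρ, h₀, q₀) be a pseudocovering for P₀, let S ⊆ P₀ be closed with proper inclusion, and let g : S → P be proper, open, continuous, and surjective. Set Y = q₀⁻¹(S), h = h₀ restricted to Y, and q = g ∘ (q₀|_Y). Then (Y, Z, ρ, h, q) is a pseudocovering for P. -/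
open Set

/-- Let `(Y₀, Z, ρ, h₀, q₀)` be a pseudocovering of a noncompact second countable
locally compact Hausdorff space `P₀`, let `S ⊆ P₀` be closed with proper inclusion,
and let `g : S → P` be proper, open, continuous and surjective onto a noncompact
second countable locally compact Hausdorff space `P`. Set `Y = q₀⁻¹(S)`,
`h = h₀|_Y` and `q = g ∘ (q₀|_Y)`. Then `(Y, Z, ρ, h, q)` is a pseudocovering
for `P`. -/
theorem pseudocovering_restrict
    {P₀ P Y₀ Z : Type*}
    [TopologicalSpace P₀] [T2Space P₀] [LocallyCompactSpace P₀]
    [SecondCountableTopology P₀] [NoncompactSpace P₀]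
    [TopologicalSpace P] [T2Space P] [LocallyCompactSpace P]
    [SecondCountableTopology P] [NoncompactSpace P]
    [TopologicalSpace Y₀] [T2Space Y₀] [LocallyCompactSpace Y₀]
    [SecondCountableTopology Y₀]
    [MetricSpace Z] [CompactSpace Z]
    (h₀ : Y₀ → Z) (h₀inj : Function.Injective h₀) (h₀cont : Continuous h₀)
    (q₀ : Y₀ → P₀) (q₀cont : Continuous q₀) (q₀surj : Function.Surjective q₀)
    (q₀open : IsOpenMap q₀)
    (q₀proper : ∀ K : Set P₀, IsCompact K → IsCompact (q₀ ⁻¹' K))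
    (h₀dense : ∀ ε : ℝ, 0 < ε → ∃ K : Set P₀, IsCompact K ∧
      ∀ x : P₀, x ∉ K → ∀ z : Z, ∃ y : Y₀, q₀ y = x ∧ dist (h₀ y) z ≤ ε)
    (S : Set P₀) (hSclosed : IsClosed S)
    (hSproper : ∀ K : Set P₀, IsCompact K → IsCompact (K ∩ S))
    (g : S → P) (gcont : Continuous g) (gsurj : Function.Surjective g)
    (gopen : IsOpenMap g)
    (gproper : ∀ K : Set P, IsCompact K → IsCompact (g ⁻¹' K)) :
    -- `Y = q₀⁻¹(S)` is a second countable locally compact Hausdorff space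
    (T2Space (q₀ ⁻¹' S) ∧ LocallyCompactSpace (q₀ ⁻¹' S) ∧
      SecondCountableTopology (q₀ ⁻¹' S)) ∧
    -- `h = h₀|_Y` is injective and continuous
    (Function.Injective (fun y : q₀ ⁻¹' S => h₀ y) ∧
      Continuous (fun y : q₀ ⁻¹' S => h₀ y)) ∧
    -- `q = g ∘ (q₀|_Y)` is a proper open continuous surjection
    (Continuous (fun y : q₀ ⁻¹' S => g ⟨q₀ y, y.2⟩) ∧
      Function.Surjective (fun y : q₀ ⁻¹' S => g ⟨q₀ y, y.2⟩) ∧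
      IsOpenMap (fun y : q₀ ⁻¹' S => g ⟨q₀ y, y.2⟩) ∧
      ∀ K : Set P, IsCompact K →
        IsCompact ((fun y : q₀ ⁻¹' S => g ⟨q₀ y, y.2⟩) ⁻¹' K)) ∧
    -- the `ε`-density condition
    (∀ ε : ℝ, 0 < ε → ∃ K : Set P, IsCompact K ∧
      ∀ x : P, x ∉ K → ∀ z : Z, ∃ y : q₀ ⁻¹' S,
        g ⟨q₀ y, y.2⟩ = x ∧ dist (h₀ y) z ≤ ε) := by
  have hYclosed : IsClosed (q₀ ⁻¹' S) := hSclosed.preimage q₀cont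
  haveI : LocallyCompactSpace (q₀ ⁻¹' S) := hYclosed.locallyCompactSpace
  refine ⟨⟨inferInstance, inferInstance, inferInstance⟩, ?_, ?_, ?_⟩
  · exact ⟨fun a b hab => Subtype.ext (h₀inj hab),
      h₀cont.comp continuous_subtype_val⟩
  · have hq'cont : Continuous (fun y : q₀ ⁻¹' S => (⟨q₀ y, y.2⟩ : S)) :=
      Continuous.subtype_mk (q₀cont.comp continuous_subtype_val) _
    have hq'open : IsOpenMap (fun y : q₀ ⁻¹' S => (⟨q₀ y, y.2⟩ : S)) := by
      intro U hU
      rw [isOpen_induced_iff] at hU ⊢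
      obtain ⟨V, hV, rfl⟩ := hU
      refine ⟨q₀ '' V, q₀open V hV, ?_⟩
      ext s
      constructor
      · rintro ⟨v, hv, hps⟩
        exact ⟨⟨v, show q₀ v ∈ S by rw [hps]; exact s.2⟩, hv, Subtype.ext hps⟩
      · rintro ⟨v, hv, rfl⟩
        exact ⟨v.1, hv, rfl⟩
    refine ⟨gcont.comp hq'cont, ?_, ?_, ?_⟩
    · intro x
      obtain ⟨s, hs⟩ := gsurj x
      obtain ⟨v, hv⟩ := q₀surj s.1
      refine ⟨⟨v, by rw [mem_preimage, hv]; exact s.2⟩, ?_⟩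
      simp only
      rw [← hs]
      congr 1
      exact Subtype.ext hv
    · exact (gopen.comp hq'open : _)
    · intro K hK
      have hC : IsCompact (Subtype.val '' (g ⁻¹' K)) :=
        (gproper K hK).image continuous_subtype_val
      have hCp : IsCompact (q₀ ⁻¹' (Subtype.val '' (g ⁻¹' K))) := q₀proper _ hC
      have heq : ((fun y : q₀ ⁻¹' S => g ⟨q₀ y, y.2⟩) ⁻¹' K)
          = Subtype.val ⁻¹' (q₀ ⁻¹' (Subtype.val '' (g ⁻¹' K))) := by
        ext y
        simp only [mem_preimage, mem_image]
        constructor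
        · intro hy
          exact ⟨⟨q₀ y.1, y.2⟩, hy, rfl⟩
        · rintro ⟨s, hs, hsv⟩
          have : (⟨q₀ y.1, y.2⟩ : S) = s := Subtype.ext hsv.symm
          rwa [this]
      rw [heq, Subtype.isCompact_iff, image_preimage_eq_inter_range,
        Subtype.range_coe]
      exact hCp.inter_right hYclosed
  · intro ε hε
    obtain ⟨K₀, hK₀, hdense⟩ := h₀dense ε hε
    refine ⟨g '' (Subtype.val ⁻¹' K₀), ?_, ?_⟩
    · refine IsCompact.image ?_ gcont
      rw [Subtype.isCompact_iff, image_preimage_eq_inter_range,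
        Subtype.range_coe]
      exact hSproper K₀ hK₀
    · intro x hx z
      obtain ⟨s, hs⟩ := gsurj x
      have hsK : (s : P₀) ∉ K₀ := fun h => hx ⟨s, h, hs⟩
      obtain ⟨v, hv, hd⟩ := hdense s.1 hsK z
      refine ⟨⟨v, by rw [mem_preimage, hv]; exact s.2⟩, ?_, hd⟩
      simp only
      rw [← hs]
      congr 1
      exact Subtype.ext hv
end

section
/- Let A be a C*-algebra with the ideal property and let α : G → Aut(A) be a continuous action of a connected Hausdorff topological group G. Then every closed ideal of A is G-invariant; in particular, the action of G on Prim(A) is trivial, and if the action is minimal then A is simple. -/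
open Set

/-! A projection within distance `1` of an element of an ideal lies in that ideal, so along
the continuous path `g ↦ α g p` of projections on the connected group `G`, membership of
`α g p` in a closed ideal `I` is clopen, hence holds for all `g` once it holds at `g = 1`.
By the ideal property `I` is the closed ideal generated by such projections `p`, and `α g` is
continuous, so `α g (I) ⊆ I`; applying this to `g⁻¹` gives equality. -/

namespace TwoSidedIdeal

theorem mapsTo_of_subset_closure_span {R F : Type*} [NonUnitalNonAssocRing R]
    [TopologicalSpace R] [FunLike F R R] [NonUnitalRingHomClass F R R] {φ : F}
    (hφ : Continuous φ) {I J : TwoSidedIdeal R} (hJ : IsClosed (J : Set R)) {s : Set R}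
    (hI : (I : Set R) ⊆ closure (span s)) (hs : MapsTo φ s J) : MapsTo φ I J := by
  have hcomap : (comap φ J : Set R) = φ ⁻¹' J := Set.ext fun _ ↦ mem_comap φ
  have hspan : (span s : Set R) ⊆ φ ⁻¹' J := hcomap ▸ span_le.mpr (hcomap ▸ hs)
  exact fun x hx ↦ closure_minimal hspan (hJ.preimage hφ) (hI hx)

variable {A : Type*} [NormedRing A] [CompleteSpace A]

/-- `q` is recovered from `q p q ∈ I` because `q p q = q (1 - q (q - p) q)` and the second factor
is invertible. -/
theorem mem_of_isIdempotentElem_of_norm_sub_lt_one (I : TwoSidedIdeal A) {p q : A} (hp : p ∈ I)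
    (hq : IsIdempotentElem q) (hq_norm : ‖q‖ ≤ 1) (hpq : ‖q - p‖ < 1) : q ∈ I := by
  have hsmall : ‖q * (q - p) * q‖ < 1 :=
    calc ‖q * (q - p) * q‖ ≤ ‖q‖ * ‖q - p‖ * ‖q‖ := norm_mul₃_le
      _ ≤ 1 * ‖q - p‖ * 1 := by gcongr
      _ < 1 := by simpa using hpq
  let u : Aˣ := Units.oneSub _ hsmall
  have hqu : q * u = q * p * q := by
    simp only [u, Units.val_oneSub, mul_sub, sub_mul, mul_one, ← mul_assoc, hq.eq]
    abel
  have : q = q * p * q * ↑u⁻¹ := by rw [← hqu, Units.mul_inv_cancel_right]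
  rw [this]
  exact I.mul_mem_right _ _ (I.mul_mem_right _ _ (I.mul_mem_left _ _ hp))

variable [StarRing A] [CStarRing A]

theorem mem_of_isStarProjection_of_norm_sub_lt_one (I : TwoSidedIdeal A) {p q : A} (hp : p ∈ I)
    (hq : IsStarProjection q) (hpq : ‖q - p‖ < 1) : q ∈ I :=
  I.mem_of_isIdempotentElem_of_norm_sub_lt_one hp hq.isIdempotentElem (hq.norm_le q) hpq

theorem apply_mem_of_continuous_isStarProjection {X : Type*} [TopologicalSpace X]
    [PreconnectedSpace X] {I : TwoSidedIdeal A} (hI : IsClosed (I : Set A)) {f : X → A}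
    (hf : Continuous f) (hproj : ∀ x, IsStarProjection (f x)) {x₀ : X} (h₀ : f x₀ ∈ I)
    (x : X) : f x ∈ I := by
  have hopen : IsOpen (f ⁻¹' I) := by
    refine isOpen_iff_mem_nhds.mpr fun y hy ↦ ?_
    filter_upwards [hf.continuousAt.preimage_mem_nhds (Metric.ball_mem_nhds (f y) one_pos)]
      with z hz
    exact I.mem_of_isStarProjection_of_norm_sub_lt_one hy (hproj z)
      (by simpa [dist_eq_norm] using hz)
  have huniv : f ⁻¹' I = univ := IsClopen.eq_univ ⟨hI.preimage hf, hopen⟩ ⟨x₀, h₀⟩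
  exact (huniv ▸ mem_univ x : x ∈ f ⁻¹' I)

end TwoSidedIdeal

theorem ideal_property_connected_group_action_general
    {G A : Type*} [Group G] [TopologicalSpace G]
    [ConnectedSpace G]
    [NormedRing A] [StarRing A] [CStarRing A] [CompleteSpace A]
    [NormedAlgebra ℂ A] [StarModule ℂ A]
    -- the ideal property
    (hip : ∀ I : TwoSidedIdeal A, IsClosed (I : Set A) →
      (I : Set A) =
        closure (TwoSidedIdeal.span
          {p : A | p ∈ I ∧ IsSelfAdjoint p ∧ IsIdempotentElem p} : Set A))
    -- a continuous action of `G` on `A` by *-automorphisms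
    (α : G → A ≃⋆ₐ[ℂ] A)
    (hone : ∀ a : A, α 1 a = a)
    (hmul : ∀ g h : G, ∀ a : A, α (g * h) a = α g (α h a))
    (hcont : ∀ a : A, Continuous fun g : G => α g a) :
    (∀ I : TwoSidedIdeal A, IsClosed (I : Set A) → ∀ g : G,
      (α g) '' (I : Set A) = (I : Set A)) ∧
    ((∀ I : TwoSidedIdeal A, IsClosed (I : Set A) →
        (∀ g : G, (α g) '' (I : Set A) = (I : Set A)) → I = ⊥ ∨ I = ⊤) →
      ∀ I : TwoSidedIdeal A, IsClosed (I : Set A) → I = ⊥ ∨ I = ⊤) := by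
  let _ : CStarAlgebra A := {}
  have hmaps (I : TwoSidedIdeal A) (hI : IsClosed (I : Set A)) (g : G) :
      MapsTo (α g) I I := by
    refine TwoSidedIdeal.mapsTo_of_subset_closure_span (StarAlgEquiv.isometry (α g)).continuous hI
      (hip I hI).subset fun p ⟨hp, hsa, hid⟩ ↦ ?_
    refine TwoSidedIdeal.apply_mem_of_continuous_isStarProjection hI (hcont p)
      (fun h ↦ IsStarProjection.map ⟨hid, hsa⟩ (α h)) (x₀ := 1) ?_ g
    simpa only [hone] using hp
  have hinvariant (I : TwoSidedIdeal A) (hI : IsClosed (I : Set A)) (g : G) :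
      α g '' I = I := by
    refine (hmaps I hI g).image_subset.antisymm fun a ha ↦ ⟨α g⁻¹ a, hmaps I hI g⁻¹ ha, ?_⟩
    rw [← hmul, mul_inv_cancel, hone]
  exact ⟨hinvariant, fun hminimal I hI ↦ hminimal I hI (hinvariant I hI)⟩

/-- Let `A` be a C*-algebra with the ideal property (every closed two-sided ideal is
generated as a closed ideal by the projections it contains) and let `α` be a
continuous action of a connected Hausdorff topological group `G` on `A` by
*-automorphisms. Then every closed ideal of `A` is `G`-invariant (so the action on
`Prim(A)` is trivial), and if the action is minimal then `A` is simple. -/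
theorem ideal_property_connected_group_action
    {G A : Type*} [Group G] [TopologicalSpace G] [IsTopologicalGroup G]
    [ConnectedSpace G] [T2Space G]
    [NormedRing A] [StarRing A] [CStarRing A] [CompleteSpace A]
    [NormedAlgebra ℂ A] [StarModule ℂ A]
    -- the ideal property
    (hip : ∀ I : TwoSidedIdeal A, IsClosed (I : Set A) →
      (I : Set A) =
        closure (TwoSidedIdeal.span
          {p : A | p ∈ I ∧ IsSelfAdjoint p ∧ IsIdempotentElem p} : Set A))
    -- a continuous action of `G` on `A` by *-automorphisms
    (α : G → A ≃⋆ₐ[ℂ] A)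
    (hone : ∀ a : A, α 1 a = a)
    (hmul : ∀ g h : G, ∀ a : A, α (g * h) a = α g (α h a))
    (hcont : ∀ a : A, Continuous fun g : G => α g a) :
    (∀ I : TwoSidedIdeal A, IsClosed (I : Set A) → ∀ g : G,
      (α g) '' (I : Set A) = (I : Set A)) ∧
    ((∀ I : TwoSidedIdeal A, IsClosed (I : Set A) →
        (∀ g : G, (α g) '' (I : Set A) = (I : Set A)) → I = ⊥ ∨ I = ⊤) →
      ∀ I : TwoSidedIdeal A, IsClosed (I : Set A) → I = ⊥ ∨ I = ⊤) :=
  ideal_property_connected_group_action_general hip α hone hmul hcont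
end

section
/- Let A be a C*-algebra and J ⊆ A a closed two-sided ideal. Define M(A, J) = {x ∈ M(A) : xA ⊆ J}, where M(A) is the multiplier algebra. Then: (1) M(A, J) = {x ∈ M(A) : Ax ⊆ J}; (2) M(A, J) is the kernel of the canonical map M(A) → M(A/J), hence a closed ideal of M(A); (3) the closure of M(A,J)·A equals M(A,J) ∩ A, which equals J; (4) M(A, J) is the strict closure of J in M(A). -/
open MultiplierAlgebra Filter Topology

/-! Everything follows from the existence of an approximate unit `e` in `A`: if `c * u ∈ J` for
all `u`, then `c = lim c * e` lies in the closed ideal `J`. This gives the symmetry (1), the fact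
that multipliers preserve `J` (so `M(A, J)` is an ideal), and `M(A, J) ∩ A = J`. Since
`x a = lim x (e a)` and `a x = lim a (x e)`, every `x ∈ M(A)` is the strict limit of `x e ∈ A`,
and `x e ∈ J` when `x ∈ M(A, J)`; conversely, strict limits of elements of `J` map `A` into the
closure of `J`. -/

theorem CStarAlgebra.exists_isApproximateUnit (A : Type*) [NonUnitalCStarAlgebra A] :
    ∃ l : Filter A, l.IsApproximateUnit :=
  let _ := CStarAlgebra.spectralOrder A
  let _ := CStarAlgebra.spectralOrderedRing A
  ⟨_, (CStarAlgebra.increasingApproximateUnit A).toIsApproximateUnit⟩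

namespace TwoSidedIdeal

variable {A : Type*} [NonUnitalRing A] [TopologicalSpace A] {l : Filter A} {J : TwoSidedIdeal A}

theorem mem_of_forall_mul_right_mem (hl : l.IsApproximateUnit) (hJ : IsClosed (J : Set A))
    {c : A} (h : ∀ u, c * u ∈ J) : c ∈ J :=
  haveI := hl.neBot
  hJ.mem_of_tendsto (hl.tendsto_mul_left c) (.of_forall h)

theorem mem_of_forall_mul_left_mem (hl : l.IsApproximateUnit) (hJ : IsClosed (J : Set A))
    {c : A} (h : ∀ u, u * c ∈ J) : c ∈ J :=
  haveI := hl.neBot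
  hJ.mem_of_tendsto (hl.tendsto_mul_right c) (.of_forall h)

theorem smul_mem_of_isClosed {R : Type*} [SMul R A] [SMulCommClass R A A]
    [ContinuousConstSMul R A] (hl : l.IsApproximateUnit) (hJ : IsClosed (J : Set A))
    (r : R) {c : A} (hc : c ∈ J) : r • c ∈ J :=
  haveI := hl.neBot
  hJ.mem_of_tendsto
    (((hl.tendsto_mul_left c).const_smul r).congr fun u => (mul_smul_comm r c u).symm)
    (.of_forall fun _ => J.mul_mem_right c _ hc)

theorem span_subset_of_isClosed {R : Type*} [Semiring R] [Module R A] [SMulCommClass R A A]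
    [ContinuousConstSMul R A] (hl : l.IsApproximateUnit) (hJ : IsClosed (J : Set A))
    {s : Set A} (hs : s ⊆ J) : (Submodule.span R s : Set A) ⊆ J := by
  intro c hc
  induction hc using Submodule.span_induction with
  | mem b hb => exact hs hb
  | zero => exact J.zero_mem
  | add _ _ _ _ hc hd => exact J.add_mem hc hd
  | smul r _ _ hc => exact smul_mem_of_isClosed hl hJ r hc

theorem setOf_forall_mul_mem_eq (hl : l.IsApproximateUnit) (hJ : IsClosed (J : Set A)) :
    {c : A | ∀ a, c * a ∈ J} = J :=
  Set.ext fun _ => ⟨mem_of_forall_mul_right_mem hl hJ, fun hc a => J.mul_mem_right _ a hc⟩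

end TwoSidedIdeal

namespace DoubleCentralizer

variable {𝕜 A : Type*} [NontriviallyNormedField 𝕜] [NonUnitalNormedRing A] [NormedSpace 𝕜 A]
  [SMulCommClass 𝕜 A A] [IsScalarTower 𝕜 A A] {l : Filter A} {J : TwoSidedIdeal A}

theorem fst_apply_mul (hl : l.IsApproximateUnit) (x : 𝓜(𝕜, A)) (a b : A) :
    x.fst (a * b) = x.fst a * b := by
  have := hl.neBot
  have h : ∀ u, u * (x.fst (a * b) - x.fst a * b) = 0 := fun u => by
    rw [mul_sub, ← x.central, ← mul_assoc, x.central, mul_assoc, sub_self]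
  exact sub_eq_zero.mp <| tendsto_nhds_unique (hl.tendsto_mul_right _)
    (tendsto_const_nhds.congr fun u => (h u).symm)

theorem continuous_fst_apply (a : A) : Continuous fun x : 𝓜(𝕜, A) => x.fst a :=
  (continuous_fst.comp isUniformEmbedding_toProdMulOpposite.uniformContinuous.continuous).clm_apply
    continuous_const

theorem isClosed_setOf_forall_fst_mem (hJ : IsClosed (J : Set A)) :
    IsClosed {x : 𝓜(𝕜, A) | ∀ a, x.fst a ∈ J} := by
  simp only [Set.ofPred_forall]
  exact isClosed_iInter fun a => hJ.preimage (continuous_fst_apply a)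

theorem snd_mem_of_forall_fst_mem (hl : l.IsApproximateUnit) (hJ : IsClosed (J : Set A))
    {x : 𝓜(𝕜, A)} (h : ∀ a, x.fst a ∈ J) (a : A) : x.snd a ∈ J :=
  J.mem_of_forall_mul_right_mem hl hJ fun u => x.central a u ▸ J.mul_mem_left a _ (h u)

theorem fst_mem_of_forall_snd_mem (hl : l.IsApproximateUnit) (hJ : IsClosed (J : Set A))
    {x : 𝓜(𝕜, A)} (h : ∀ a, x.snd a ∈ J) (a : A) : x.fst a ∈ J :=
  J.mem_of_forall_mul_left_mem hl hJ fun u => x.central u a ▸ J.mul_mem_right _ a (h u)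

theorem fst_mem_of_mem (hl : l.IsApproximateUnit) (hJ : IsClosed (J : Set A)) (x : 𝓜(𝕜, A))
    {j : A} (hj : j ∈ J) : x.fst j ∈ J :=
  J.mem_of_forall_mul_left_mem hl hJ fun u => x.central u j ▸ J.mul_mem_left _ j hj

theorem setOf_forall_fst_mem_eq_setOf_forall_snd_mem (hl : l.IsApproximateUnit)
    (hJ : IsClosed (J : Set A)) :
    {x : 𝓜(𝕜, A) | ∀ a, x.fst a ∈ J} = {x : 𝓜(𝕜, A) | ∀ a, x.snd a ∈ J} :=
  Set.ext fun _ => ⟨snd_mem_of_forall_fst_mem hl hJ, fst_mem_of_forall_snd_mem hl hJ⟩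

theorem exists_twoSidedIdeal_coe_eq (hl : l.IsApproximateUnit) (hJ : IsClosed (J : Set A)) :
    ∃ I : TwoSidedIdeal 𝓜(𝕜, A), (I : Set 𝓜(𝕜, A)) = {x | ∀ a, x.fst a ∈ J} :=
  ⟨.mk' {x | ∀ a, x.fst a ∈ J} (fun _ => J.zero_mem) (fun hx hy a => J.add_mem (hx a) (hy a))
    (fun hx a => J.neg_mem (hx a)) (fun {x _} hy a => fst_mem_of_mem hl hJ x (hy a))
    (fun {_ y} hx a => hx (y.fst a)), TwoSidedIdeal.coe_mk' ..⟩

theorem closure_span_fst_apply_eq (hl : l.IsApproximateUnit) (hJ : IsClosed (J : Set A)) :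
    closure (Submodule.span 𝕜
      {b : A | ∃ x : 𝓜(𝕜, A), (∀ a, x.fst a ∈ J) ∧ ∃ a, b = x.fst a} : Set A) = J := by
  have := hl.neBot
  refine (closure_minimal (J.span_subset_of_isClosed hl hJ ?_) hJ).antisymm fun j hj => ?_
  · rintro _ ⟨x, hx, a, rfl⟩
    exact hx a
  · refine mem_closure_of_tendsto (hl.tendsto_mul_left j) (.of_forall fun e => ?_)
    exact Submodule.subset_span ⟨(j : 𝓜(𝕜, A)), fun a => J.mul_mem_right j a hj, e, rfl⟩

theorem tendsto_fst_apply_mul (hl : l.IsApproximateUnit) (x : 𝓜(𝕜, A)) (a : A) :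
    Tendsto (fun e => x.fst e * a) l (𝓝 (x.fst a)) :=
  ((x.fst.continuous.tendsto a).comp (hl.tendsto_mul_right a)).congr fun e =>
    fst_apply_mul hl x e a

theorem tendsto_mul_fst_apply (hl : l.IsApproximateUnit) (x : 𝓜(𝕜, A)) (a : A) :
    Tendsto (fun e => a * x.fst e) l (𝓝 (x.snd a)) := by
  simpa only [x.central] using hl.tendsto_mul_left (x.snd a)

variable (𝕜) in
/-- The sets `{x | ∀ a ∈ F, ‖x a - y a‖ < ε ∧ ‖a x - a y‖ < ε}` form a basis of strict
neighbourhoods of `y`, so this is the closure of `s ⊆ A ⊆ 𝓜(𝕜, A)` in the strict topology. -/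
def strictClosure (s : Set A) : Set 𝓜(𝕜, A) :=
  {x | ∀ ε : ℝ, 0 < ε → ∀ F : Finset A, ∃ j : A, j ∈ s ∧
    ∀ a ∈ F, ‖x.fst a - j * a‖ < ε ∧ ‖x.snd a - a * j‖ < ε}

theorem strictClosure_eq_setOf_forall_fst_mem (hl : l.IsApproximateUnit)
    (hJ : IsClosed (J : Set A)) : strictClosure 𝕜 (J : Set A) = {x | ∀ a, x.fst a ∈ J} := by
  ext x
  refine ⟨fun h a => hJ.closure_subset (Metric.mem_closure_iff.mpr fun ε hε => ?_),
    fun h ε hε F => ?_⟩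
  · obtain ⟨j, hj, hjε⟩ := h ε hε {a}
    exact ⟨j * a, J.mul_mem_right j a hj, by
      simpa only [dist_eq_norm] using (hjε a (Finset.mem_singleton_self a)).1⟩
  · have := hl.neBot
    have hnear (a : A) :
        ∀ᶠ e in l, ‖x.fst a - x.fst e * a‖ < ε ∧ ‖x.snd a - a * x.fst e‖ < ε := by
      filter_upwards [Metric.tendsto_nhds.mp (tendsto_fst_apply_mul hl x a) ε hε,
        Metric.tendsto_nhds.mp (tendsto_mul_fst_apply hl x a) ε hε] with e he₁ he₂
      rw [dist_comm, dist_eq_norm] at he₁ he₂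
      exact ⟨he₁, he₂⟩
    obtain ⟨e, he⟩ := (F.eventually_all.mpr fun a _ => hnear a).exists
    exact ⟨x.fst e, h e, he⟩

end DoubleCentralizer

open DoubleCentralizer in
/-- Let `A` be a C*-algebra and `J ⊆ A` a closed two-sided ideal, and let
`M(A, J) = {x ∈ M(A) : xA ⊆ J}` inside the multiplier algebra `M(A) = 𝓜(ℂ, A)`
(where for a multiplier `x` and `a ∈ A`, `x·a = x.fst a` and `a·x = x.snd a`).
Then: (1) `M(A, J) = {x : Ax ⊆ J}`; (2) `M(A, J)` is a closed two-sided ideal of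
`M(A)` (it is the kernel of the canonical map `M(A) → M(A/J)`, i.e. it consists of
the multipliers acting by `J` on both sides); (3) the closure of the linear span of
`M(A, J)·A` equals `J`, and `M(A, J) ∩ A = J`; (4) `M(A, J)` is the strict closure
of `J` in `M(A)`. -/
theorem multiplier_ideal_properties
    {A : Type*} [NonUnitalNormedRing A] [StarRing A] [CStarRing A]
    [NormedSpace ℂ A] [SMulCommClass ℂ A A] [IsScalarTower ℂ A A]
    [StarModule ℂ A] [CompleteSpace A]
    (J : TwoSidedIdeal A) (hJ : IsClosed (J : Set A)) :
    -- (1)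
    ({x : 𝓜(ℂ, A) | ∀ a : A, x.fst a ∈ J} = {x : 𝓜(ℂ, A) | ∀ a : A, x.snd a ∈ J}) ∧
    -- (2)
    (∃ I : TwoSidedIdeal 𝓜(ℂ, A),
      (I : Set 𝓜(ℂ, A)) = {x : 𝓜(ℂ, A) | ∀ a : A, x.fst a ∈ J} ∧
      IsClosed (I : Set 𝓜(ℂ, A))) ∧
    -- (3)
    (closure (Submodule.span ℂ
        {b : A | ∃ x : 𝓜(ℂ, A), (∀ a : A, x.fst a ∈ J) ∧ ∃ a : A, b = x.fst a}
        : Set A) = (J : Set A)) ∧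
    ({j : A | ∀ a : A, j * a ∈ J} = (J : Set A)) ∧
    -- (4): `M(A, J)` is the strict closure of `J`
    (∀ x : 𝓜(ℂ, A), (∀ a : A, x.fst a ∈ J) ↔
      ∀ ε : ℝ, 0 < ε → ∀ F : Finset A, ∃ j : A, j ∈ J ∧
        ∀ a ∈ F, ‖x.fst a - j * a‖ < ε ∧ ‖x.snd a - a * j‖ < ε) := by
  let _ : NonUnitalCStarAlgebra A := {}
  obtain ⟨l, hl⟩ := CStarAlgebra.exists_isApproximateUnit A
  obtain ⟨I, hI⟩ := exists_twoSidedIdeal_coe_eq (𝕜 := ℂ) hl hJ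
  exact ⟨setOf_forall_fst_mem_eq_setOf_forall_snd_mem hl hJ,
    ⟨I, hI, hI ▸ isClosed_setOf_forall_fst_mem hJ⟩, closure_span_fst_apply_eq hl hJ,
    J.setOf_forall_mul_mem_eq hl hJ,
    fun x => (Set.ext_iff.mp (strictClosure_eq_setOf_forall_fst_mem hl hJ) x).symm⟩
end

section
/- Let A be a nonzero stable C*-algebra, let J ⊆ A be a closed ideal, let s₁, s₂, … ∈ M(A) be isometries with mutually orthogonal ranges such that Σ sₙsₙ* converges strictly to 1, and let δ_∞(a) = Σ sₙ a sₙ* (strict convergence) for a ∈ M(A). Then for a ∈ M(A): a ∈ M(A, J) if and only if δ_∞(a) ∈ M(A, J). Moreover, any two such choices of isometry sequences yield homomorphisms δ_∞ that are unitarily equivalent in M(A). -/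
set_option linter.unusedSectionVars false

open MultiplierAlgebra Filter Topology

section AuxMult

variable {A : Type*} [NonUnitalNormedRing A] [StarRing A] [CStarRing A]
    [NormedSpace ℂ A] [SMulCommClass ℂ A A] [IsScalarTower ℂ A A]
    [StarModule ℂ A] [CompleteSpace A]

lemma dc_cancel_left {z w : A} (h : ∀ c : A, c * z = c * w) : z = w := by
  have h1 : star (z - w) * (z - w) = 0 := by
    rw [mul_sub, h (star (z - w)), sub_self]
  rw [← sub_eq_zero]
  exact (CStarRing.star_mul_self_eq_zero_iff _).mp h1

lemma dc_cancel_right {z w : A} (h : ∀ c : A, z * c = w * c) : z = w := by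
  have h1 : (z - w) * star (z - w) = 0 := by
    rw [sub_mul, h (star (z - w)), sub_self]
  rw [← sub_eq_zero]
  exact (CStarRing.mul_star_self_eq_zero_iff _).mp h1

lemma dc_ext_fst {x y : 𝓜(ℂ, A)} (h : ∀ a : A, x.fst a = y.fst a) : x = y := by
  apply DoubleCentralizer.ext
  apply Prod.ext
  · exact ContinuousLinearMap.ext h
  · refine ContinuousLinearMap.ext fun b => dc_cancel_right fun a => ?_
    show x.snd b * a = y.snd b * a
    rw [x.central, y.central, h]

lemma dc_fst_mul (x y : 𝓜(ℂ, A)) (a : A) : (x * y).fst a = x.fst (y.fst a) := by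
  rw [DoubleCentralizer.mul_fst]; rfl

lemma dc_one_fst (a : A) : (1 : 𝓜(ℂ, A)).fst a = a := by
  rw [DoubleCentralizer.one_fst]; rfl

lemma dc_sub_fst (x y : 𝓜(ℂ, A)) (a : A) : (x - y).fst a = x.fst a - y.fst a := by
  rw [DoubleCentralizer.sub_fst]; rfl

lemma dc_sub_snd (x y : 𝓜(ℂ, A)) (a : A) : (x - y).snd a = x.snd a - y.snd a := by
  rw [DoubleCentralizer.sub_snd]; rfl

lemma dc_sum_fst {ι : Type*} (F : Finset ι) (f : ι → 𝓜(ℂ, A)) (a : A) :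
    (∑ i ∈ F, f i).fst a = ∑ i ∈ F, (f i).fst a := by
  induction F using Finset.cons_induction with
  | empty => rw [Finset.sum_empty, Finset.sum_empty, DoubleCentralizer.zero_fst]; rfl
  | cons i F hi ih =>
    rw [Finset.sum_cons, Finset.sum_cons, DoubleCentralizer.add_fst,
      ContinuousLinearMap.add_apply, ih]

lemma dc_fst_mul_right (m : 𝓜(ℂ, A)) (a b : A) : m.fst (a * b) = m.fst a * b := by
  refine dc_cancel_left fun c => ?_
  rw [← m.central, ← mul_assoc, m.central, mul_assoc]

lemma dc_star_fst_mul_fst (z : 𝓜(ℂ, A)) (c d : A) :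
    star (z.fst c) * z.fst d = star c * ((star z * z).fst d) := by
  have h1 : star (z.fst c) = (star z).snd (star c) := by
    rw [DoubleCentralizer.star_snd, star_star]
  rw [h1, (star z).central, dc_fst_mul]

lemma dc_fst_norm_sq (z : 𝓜(ℂ, A)) (a : A) :
    ‖z.fst a‖ ^ 2 = ‖star a * ((star z * z).fst a)‖ := by
  rw [sq, ← CStarRing.norm_star_mul_self, dc_star_fst_mul_fst]

lemma dc_star_sum (s t : ℕ → 𝓜(ℂ, A)) (F : Finset ℕ) :
    star (∑ n ∈ F, t n * star (s n)) = ∑ n ∈ F, s n * star (t n) := by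
  rw [star_sum]
  exact Finset.sum_congr rfl fun n _ => by rw [star_mul, star_star]

lemma dc_sum_mul_orth (e f t : ℕ → 𝓜(ℂ, A))
    (ht_isom : ∀ n, star (t n) * t n = 1)
    (ht_orth : ∀ m n, m ≠ n → star (t m) * t n = 0) (F : Finset ℕ) :
    (∑ m ∈ F, e m * star (t m)) * (∑ n ∈ F, t n * star (f n)) =
      ∑ n ∈ F, e n * star (f n) := by
  rw [Finset.sum_mul_sum]
  have h1 : ∀ m ∈ F, ∑ n ∈ F, (e m * star (t m)) * (t n * star (f n)) =
      if m ∈ F then e m * star (f m) else 0 := by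
    intro m hm
    rw [← Finset.sum_ite_eq F m (fun n => e m * star (f n))]
    refine Finset.sum_congr rfl fun n hn => ?_
    by_cases h : m = n
    · subst h
      rw [if_pos rfl]
      calc e m * star (t m) * (t m * star (f m))
          = e m * ((star (t m) * t m) * star (f m)) := by
            rw [mul_assoc, ← mul_assoc (star (t m))]
        _ = e m * star (f m) := by rw [ht_isom m, one_mul]
    · rw [if_neg h]
      calc e m * star (t m) * (t n * star (f n))
          = e m * ((star (t m) * t n) * star (f n)) := by
            rw [mul_assoc, ← mul_assoc (star (t m))]
        _ = 0 := by rw [ht_orth m n h, zero_mul, mul_zero]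
  rw [Finset.sum_congr rfl h1]
  exact Finset.sum_congr rfl fun m hm => if_pos hm

lemma dc_sum_mul_single (e s : ℕ → 𝓜(ℂ, A))
    (hs_isom : ∀ n, star (s n) * s n = 1)
    (hs_orth : ∀ m n, m ≠ n → star (s m) * s n = 0)
    {N n : ℕ} (hn : n < N) :
    (∑ m ∈ Finset.range N, e m * star (s m)) * s n = e n := by
  rw [Finset.sum_mul]
  rw [Finset.sum_eq_single n (fun m _ hm => ?_) (fun h => absurd (Finset.mem_range.mpr hn) h)]
  · rw [mul_assoc, hs_isom, mul_one]
  · rw [mul_assoc, hs_orth m n hm, mul_zero]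

/-- The difference estimate for partial sums `Q N = ∑ tₙ sₙ*`, `fst` part. -/
lemma dc_diff_est_fst (s t : ℕ → 𝓜(ℂ, A))
    (ht_isom : ∀ n, star (t n) * t n = 1)
    (ht_orth : ∀ m n, m ≠ n → star (t m) * t n = 0)
    (a : A) {M N : ℕ} (h : M ≤ N) :
    ‖((∑ n ∈ Finset.range N, t n * star (s n) : 𝓜(ℂ, A))).fst a
      - ((∑ n ∈ Finset.range M, t n * star (s n) : 𝓜(ℂ, A))).fst a‖ ^ 2
    ≤ ‖a‖ * ‖((∑ n ∈ Finset.range N, s n * star (s n) : 𝓜(ℂ, A))).fst a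
      - ((∑ n ∈ Finset.range M, s n * star (s n) : 𝓜(ℂ, A))).fst a‖ := by
  have h1 : ((∑ n ∈ Finset.range N, t n * star (s n) : 𝓜(ℂ, A))).fst a
      - ((∑ n ∈ Finset.range M, t n * star (s n) : 𝓜(ℂ, A))).fst a
      = ((∑ n ∈ Finset.Ico M N, t n * star (s n) : 𝓜(ℂ, A))).fst a := by
    rw [Finset.sum_Ico_eq_sub _ h, dc_sub_fst]
  have h2 : star (∑ n ∈ Finset.Ico M N, t n * star (s n) : 𝓜(ℂ, A))
      * (∑ n ∈ Finset.Ico M N, t n * star (s n) : 𝓜(ℂ, A))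
      = ∑ n ∈ Finset.Ico M N, s n * star (s n) := by
    rw [dc_star_sum]
    exact dc_sum_mul_orth s s t ht_isom ht_orth _
  have h3 : ((∑ n ∈ Finset.Ico M N, s n * star (s n) : 𝓜(ℂ, A))).fst a
      = ((∑ n ∈ Finset.range N, s n * star (s n) : 𝓜(ℂ, A))).fst a
      - ((∑ n ∈ Finset.range M, s n * star (s n) : 𝓜(ℂ, A))).fst a := by
    rw [Finset.sum_Ico_eq_sub _ h, dc_sub_fst]
  calc ‖((∑ n ∈ Finset.range N, t n * star (s n) : 𝓜(ℂ, A))).fst a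
      - ((∑ n ∈ Finset.range M, t n * star (s n) : 𝓜(ℂ, A))).fst a‖ ^ 2
      = ‖((∑ n ∈ Finset.Ico M N, t n * star (s n) : 𝓜(ℂ, A))).fst a‖ ^ 2 := by rw [h1]
    _ = ‖star a * ((star (∑ n ∈ Finset.Ico M N, t n * star (s n) : 𝓜(ℂ, A))
          * (∑ n ∈ Finset.Ico M N, t n * star (s n) : 𝓜(ℂ, A))).fst a)‖ :=
          dc_fst_norm_sq _ a
    _ ≤ ‖star a‖ * ‖((star (∑ n ∈ Finset.Ico M N, t n * star (s n) : 𝓜(ℂ, A))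
          * (∑ n ∈ Finset.Ico M N, t n * star (s n) : 𝓜(ℂ, A))).fst a)‖ := norm_mul_le _ _
    _ = ‖a‖ * ‖((∑ n ∈ Finset.range N, s n * star (s n) : 𝓜(ℂ, A))).fst a
      - ((∑ n ∈ Finset.range M, s n * star (s n) : 𝓜(ℂ, A))).fst a‖ := by
        rw [norm_star, h2, h3]

/-- The difference estimate for partial sums `Q N = ∑ tₙ sₙ*`, `snd` part. -/
lemma dc_diff_est_snd (s t : ℕ → 𝓜(ℂ, A))
    (hs_isom : ∀ n, star (s n) * s n = 1)
    (hs_orth : ∀ m n, m ≠ n → star (s m) * s n = 0)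
    (a : A) {M N : ℕ} (h : M ≤ N) :
    ‖((∑ n ∈ Finset.range N, t n * star (s n) : 𝓜(ℂ, A))).snd a
      - ((∑ n ∈ Finset.range M, t n * star (s n) : 𝓜(ℂ, A))).snd a‖ ^ 2
    ≤ ‖a‖ * ‖((∑ n ∈ Finset.range N, t n * star (t n) : 𝓜(ℂ, A))).fst (star a)
      - ((∑ n ∈ Finset.range M, t n * star (t n) : 𝓜(ℂ, A))).fst (star a)‖ := by
  set R : 𝓜(ℂ, A) := ∑ n ∈ Finset.Ico M N, t n * star (s n) with hR
  have h1 : ((∑ n ∈ Finset.range N, t n * star (s n) : 𝓜(ℂ, A))).snd a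
      - ((∑ n ∈ Finset.range M, t n * star (s n) : 𝓜(ℂ, A))).snd a = R.snd a := by
    rw [hR, Finset.sum_Ico_eq_sub _ h, dc_sub_snd]
  have hstarR : star R = ∑ n ∈ Finset.Ico M N, s n * star (t n) := dc_star_sum s t _
  have h2 : star (star R) * star R = ∑ n ∈ Finset.Ico M N, t n * star (t n) := by
    rw [star_star, hstarR]
    exact dc_sum_mul_orth t t s hs_isom hs_orth _
  have h3 : ((∑ n ∈ Finset.Ico M N, t n * star (t n) : 𝓜(ℂ, A))).fst (star a)
      = ((∑ n ∈ Finset.range N, t n * star (t n) : 𝓜(ℂ, A))).fst (star a)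
      - ((∑ n ∈ Finset.range M, t n * star (t n) : 𝓜(ℂ, A))).fst (star a) := by
    rw [Finset.sum_Ico_eq_sub _ h, dc_sub_fst]
  have h4 : (star R).fst (star a) = star (R.snd a) := by
    rw [DoubleCentralizer.star_fst, star_star]
  calc ‖((∑ n ∈ Finset.range N, t n * star (s n) : 𝓜(ℂ, A))).snd a
      - ((∑ n ∈ Finset.range M, t n * star (s n) : 𝓜(ℂ, A))).snd a‖ ^ 2
      = ‖(star R).fst (star a)‖ ^ 2 := by rw [h1, h4, norm_star]
    _ = ‖star (star a) * ((star (star R) * star R).fst (star a))‖ := dc_fst_norm_sq _ _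
    _ ≤ ‖star (star a)‖ * ‖(star (star R) * star R).fst (star a)‖ := norm_mul_le _ _
    _ = ‖a‖ * ‖((∑ n ∈ Finset.range N, t n * star (t n) : 𝓜(ℂ, A))).fst (star a)
      - ((∑ n ∈ Finset.range M, t n * star (t n) : 𝓜(ℂ, A))).fst (star a)‖ := by
        rw [star_star, h2, h3]

lemma dc_cauchy_of_sq_est {g p : ℕ → A} {C : ℝ} (hC : 0 ≤ C)
    (hp : CauchySeq p)
    (est : ∀ {M N : ℕ}, M ≤ N → ‖g N - g M‖ ^ 2 ≤ C * ‖p N - p M‖) :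
    CauchySeq g := by
  rw [Metric.cauchySeq_iff] at hp ⊢
  intro ε hε
  obtain ⟨K, hK⟩ := hp (ε ^ 2 / (C + 1)) (by positivity)
  refine ⟨K, fun M hM N hN => ?_⟩
  have key : ∀ {M N : ℕ}, M ≤ N → K ≤ M → K ≤ N → dist (g M) (g N) < ε := by
    intro M N hMN hKM hKN
    have h1 := hK N hKN M hKM
    rw [dist_eq_norm] at h1 ⊢
    rw [norm_sub_rev]
    have h3 : ‖g N - g M‖ ^ 2 < ε ^ 2 := by
      refine lt_of_le_of_lt (est hMN) ?_
      have h4 : C * (ε ^ 2 / (C + 1)) = (C / (C + 1)) * ε ^ 2 := by ring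
      have h5 : C / (C + 1) < 1 := by
        rw [div_lt_one (by positivity)]; linarith
      have h6 : (0:ℝ) < ε ^ 2 := by positivity
      calc C * ‖p N - p M‖ ≤ C * (ε ^ 2 / (C + 1)) :=
            mul_le_mul_of_nonneg_left h1.le hC
        _ = (C / (C + 1)) * ε ^ 2 := h4
        _ < 1 * ε ^ 2 := by
            exact mul_lt_mul_of_pos_right h5 h6
        _ = ε ^ 2 := one_mul _
    exact lt_of_pow_lt_pow_left₀ 2 hε.le h3
  rcases le_total M N with h | h
  · exact key h hM hN
  · rw [dist_comm]; exact key h hN hM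

/-- Construction of the multiplier `u = Σ tₙ sₙ*` (strict limit of partial sums). -/
lemma dc_key_construct (s t : ℕ → 𝓜(ℂ, A))
    (hs_isom : ∀ n, star (s n) * s n = 1)
    (hs_orth : ∀ m n, m ≠ n → star (s m) * s n = 0)
    (ht_isom : ∀ n, star (t n) * t n = 1)
    (ht_orth : ∀ m n, m ≠ n → star (t m) * t n = 0)
    (hs_sum1 : ∀ a : A,
      Tendsto (fun N => ((∑ n ∈ Finset.range N, s n * star (s n)) : 𝓜(ℂ, A)).fst a)
        atTop (𝓝 a))
    (ht_sum1 : ∀ a : A,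
      Tendsto (fun N => ((∑ n ∈ Finset.range N, t n * star (t n)) : 𝓜(ℂ, A)).fst a)
        atTop (𝓝 a)) :
    ∃ u : 𝓜(ℂ, A),
      (∀ a : A, Tendsto (fun N => ((∑ n ∈ Finset.range N, t n * star (s n)) : 𝓜(ℂ, A)).fst a)
        atTop (𝓝 (u.fst a))) ∧
      (∀ a : A, Tendsto (fun N => ((∑ n ∈ Finset.range N, t n * star (s n)) : 𝓜(ℂ, A)).snd a)
        atTop (𝓝 (u.snd a))) := by
  have cau_fst : ∀ a : A,
      CauchySeq fun N => ((∑ n ∈ Finset.range N, t n * star (s n)) : 𝓜(ℂ, A)).fst a :=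
    fun a => dc_cauchy_of_sq_est (norm_nonneg a) (hs_sum1 a).cauchySeq
      (fun {M N} h => dc_diff_est_fst s t ht_isom ht_orth a h)
  have cau_snd : ∀ a : A,
      CauchySeq fun N => ((∑ n ∈ Finset.range N, t n * star (s n)) : 𝓜(ℂ, A)).snd a :=
    fun a => dc_cauchy_of_sq_est (norm_nonneg a) (ht_sum1 (star a)).cauchySeq
      (fun {M N} h => dc_diff_est_snd s t hs_isom hs_orth a h)
  choose fL hfL using fun a => cauchySeq_tendsto_of_complete (cau_fst a)
  choose fR hfR using fun a => cauchySeq_tendsto_of_complete (cau_snd a)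
  let uL : A →L[ℂ] A := continuousLinearMapOfTendsto
    (fun N => ((∑ n ∈ Finset.range N, t n * star (s n)) : 𝓜(ℂ, A)).fst)
    (tendsto_pi_nhds.mpr hfL)
  let uR : A →L[ℂ] A := continuousLinearMapOfTendsto
    (fun N => ((∑ n ∈ Finset.range N, t n * star (s n)) : 𝓜(ℂ, A)).snd)
    (tendsto_pi_nhds.mpr hfR)
  have huL : ∀ a, uL a = fL a := fun a => rfl
  have huR : ∀ a, uR a = fR a := fun a => rfl
  have hcentral : ∀ x y : A, uR x * y = x * uL y := by
    intro x y
    have h1 : Tendsto (fun N => ((∑ n ∈ Finset.range N, t n * star (s n)) : 𝓜(ℂ, A)).snd x * y)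
        atTop (𝓝 (fR x * y)) := (hfR x).mul_const y
    have h2 : (fun N => ((∑ n ∈ Finset.range N, t n * star (s n)) : 𝓜(ℂ, A)).snd x * y)
        = fun N => x * ((∑ n ∈ Finset.range N, t n * star (s n)) : 𝓜(ℂ, A)).fst y :=
      funext fun N => ((∑ n ∈ Finset.range N, t n * star (s n)) : 𝓜(ℂ, A)).central x y
    rw [h2] at h1
    have h3 : Tendsto (fun N => x * ((∑ n ∈ Finset.range N, t n * star (s n)) : 𝓜(ℂ, A)).fst y)
        atTop (𝓝 (x * fL y)) := (hfL y).const_mul x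
    rw [huL, huR]
    exact tendsto_nhds_unique h1 h3
  refine ⟨⟨(uL, uR), hcentral⟩, fun a => ?_, fun a => ?_⟩
  · exact (huL a).symm ▸ hfL a
  · exact (huR a).symm ▸ hfR a

/-- A multiplier maps a closed two-sided ideal into itself (via `fst`). -/
lemma dc_fst_mem_ideal (J : TwoSidedIdeal A) (hJ : IsClosed (J : Set A))
    (m : 𝓜(ℂ, A)) {j : A} (hj : j ∈ J) : m.fst j ∈ J := by
  letI : NonUnitalCStarAlgebra A := { }
  have hy : IsSelfAdjoint (j * star j) := IsSelfAdjoint.mul_star_self j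
  set y := j * star j with hy'
  set f : ℕ → ℝ → ℝ := fun k r => min 1 (((k:ℝ)+1) * |r|) with hf
  have hcont : ∀ k : ℕ, Continuous (f k) := fun k =>
    continuous_const.min (continuous_const.mul _root_.continuous_abs)
  have hf0 : ∀ k : ℕ, f k 0 = 0 := by intro k; simp [hf]
  set e : ℕ → A := fun k => cfcₙ (f k) y with he
  have hesa : ∀ k, IsSelfAdjoint (e k) := fun k => cfcₙ_predicate _ y
  -- the key algebraic identity
  have hfc : ∀ k : ℕ, ContinuousOn (f k) (quasispectrum ℝ y) := fun k => (hcont k).continuousOn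
  have hidc : ContinuousOn (fun r : ℝ => r) (quasispectrum ℝ y) := continuousOn_id
  have hprod : ∀ k, (e k * j - j) * star (e k * j - j)
      = cfcₙ (fun r => (f k r * r * f k r - f k r * r) - (r * f k r - r)) y := by
    intro k
    have hs1 : star (e k * j - j) = star j * e k - star j := by
      rw [star_sub, star_mul, (hesa k).star_eq]
    have expand : (e k * j - j) * (star j * e k - star j)
        = e k * y * e k - e k * y - (y * e k - y) := by
      rw [hy']
      noncomm_ring
    have c1 : cfcₙ (fun r => f k r * r) y = e k * y := by
      rw [cfcₙ_mul (f k) (fun r : ℝ => r) y (hfc k) (hf0 k) hidc rfl, cfcₙ_id' ℝ y hy]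
    have c2 : cfcₙ (fun r => r * f k r) y = y * e k := by
      rw [cfcₙ_mul (fun r : ℝ => r) (f k) y hidc rfl (hfc k) (hf0 k), cfcₙ_id' ℝ y hy]
    have c3 : cfcₙ (fun r => f k r * r * f k r) y = e k * y * e k := by
      rw [cfcₙ_mul (fun r => f k r * r) (f k) y ((hcont k).mul continuous_id).continuousOn
        (by simp [hf0 k]) (hfc k) (hf0 k), c1]
    rw [hs1, expand,
      cfcₙ_sub (fun r => f k r * r * f k r - f k r * r) (fun r => r * f k r - r) y
        ((((hcont k).mul continuous_id).mul (hcont k)).sub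
          ((hcont k).mul continuous_id)).continuousOn
        (by simp [hf0 k])
        ((continuous_id.mul (hcont k)).sub continuous_id).continuousOn (by simp [hf0 k]),
      cfcₙ_sub (fun r => f k r * r * f k r) (fun r => f k r * r) y
        (((hcont k).mul continuous_id).mul (hcont k)).continuousOn (by simp [hf0 k])
        ((hcont k).mul continuous_id).continuousOn (by simp [hf0 k]),
      cfcₙ_sub (fun r => r * f k r) (fun r : ℝ => r) y
        (continuous_id.mul (hcont k)).continuousOn (by simp [hf0 k]) hidc rfl,
      c1, c2, c3, cfcₙ_id' ℝ y hy]
  -- the norm estimate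
  have hbound : ∀ k : ℕ, ∀ r : ℝ,
      ‖(f k r * r * f k r - f k r * r) - (r * f k r - r)‖ ≤ 1 / ((k:ℝ)+1) := by
    intro k r
    have hc : (0:ℝ) < (k:ℝ) + 1 := by positivity
    have habs : (f k r * r * f k r - f k r * r) - (r * f k r - r) = r * (1 - f k r)^2 := by
      ring
    rw [Real.norm_eq_abs, habs, abs_mul, abs_of_nonneg (sq_nonneg (1 - f k r))]
    by_cases h : 1 ≤ ((k:ℝ)+1) * |r|
    · have : f k r = 1 := min_eq_left h
      rw [this]
      simp [hc.le, one_div, inv_nonneg]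
    · push_neg at h
      have hfr : f k r = ((k:ℝ)+1) * |r| := min_eq_right h.le
      have h0f : 0 ≤ f k r := by rw [hfr]; positivity
      have h1f : f k r ≤ 1 := min_le_left _ _
      have hr : |r| ≤ 1 / ((k:ℝ)+1) := by
        rw [le_div_iff₀ hc, mul_comm]
        exact h.le
      have hsq : (1 - f k r)^2 ≤ 1 := by nlinarith [h0f, h1f]
      calc |r| * (1 - f k r)^2 ≤ |r| * 1 := mul_le_mul_of_nonneg_left hsq (abs_nonneg r)
        _ = |r| := mul_one _
        _ ≤ 1 / ((k:ℝ)+1) := hr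
  -- convergence e k * j → j
  have htend : Tendsto (fun k => e k * j) atTop (𝓝 j) := by
    rw [tendsto_iff_norm_sub_tendsto_zero]
    have hle : ∀ k : ℕ, ‖e k * j - j‖ ≤ Real.sqrt (1 / ((k:ℝ)+1)) := by
      intro k
      refine Real.le_sqrt_of_sq_le ?_
      calc ‖e k * j - j‖ ^ 2 = ‖(e k * j - j) * star (e k * j - j)‖ := by
            rw [sq, ← CStarRing.norm_self_mul_star]
        _ = ‖cfcₙ (fun r => (f k r * r * f k r - f k r * r) - (r * f k r - r)) y‖ := by
            rw [hprod k]
        _ ≤ 1 / ((k:ℝ)+1) := norm_cfcₙ_le fun r _ => hbound k r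
    have hsqrt : Tendsto (fun k : ℕ => Real.sqrt (1 / ((k:ℝ)+1))) atTop (𝓝 0) := by
      have h := (Real.continuous_sqrt.tendsto 0).comp tendsto_one_div_add_atTop_nhds_zero_nat
      rw [Real.sqrt_zero] at h
      exact h
    exact squeeze_zero (fun k => norm_nonneg _) hle hsqrt
  have hmem : ∀ k, m.fst (e k * j) ∈ J := fun k => by
    rw [dc_fst_mul_right]
    exact J.mul_mem_left _ _ hj
  have hlim : Tendsto (fun k => m.fst (e k * j)) atTop (𝓝 (m.fst j)) :=
    ((m.fst.continuous.tendsto j).comp htend)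
  exact hJ.mem_of_tendsto hlim (Eventually.of_forall hmem)

end AuxMult

/-- Let `A` be a nonzero (stable) C*-algebra and `J ⊆ A` a closed ideal. Let
`s₁, s₂, …` be isometries in `M(A) = 𝓜(ℂ, A)` with mutually orthogonal ranges such
that `Σ sₙ sₙ*` converges strictly to `1`, and let `δ_∞(x) = Σ sₙ x sₙ*` (strict
convergence). Then for `x ∈ M(A)`: `x ∈ M(A, J)` iff `δ_∞(x) ∈ M(A, J)`, where
`M(A, J) = {x : xA ⊆ J}`. Moreover, any two such choices of isometry sequences give
unitarily equivalent maps `δ_∞`. -/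
theorem infinite_repeat_ideal_and_uniqueness
    {A : Type*} [NonUnitalNormedRing A] [StarRing A] [CStarRing A]
    [NormedSpace ℂ A] [SMulCommClass ℂ A A] [IsScalarTower ℂ A A]
    [StarModule ℂ A] [CompleteSpace A] [Nontrivial A]
    (J : TwoSidedIdeal A) (hJ : IsClosed (J : Set A))
    (s t : ℕ → 𝓜(ℂ, A))
    (hs_isom : ∀ n, star (s n) * s n = 1)
    (hs_orth : ∀ m n, m ≠ n → star (s m) * s n = 0)
    (hs_sum : ∀ a : A,
      Tendsto (fun N => ((∑ n ∈ Finset.range N, s n * star (s n)) : 𝓜(ℂ, A)).fst a)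
        atTop (nhds a) ∧
      Tendsto (fun N => ((∑ n ∈ Finset.range N, s n * star (s n)) : 𝓜(ℂ, A)).snd a)
        atTop (nhds a))
    (ht_isom : ∀ n, star (t n) * t n = 1)
    (ht_orth : ∀ m n, m ≠ n → star (t m) * t n = 0)
    (ht_sum : ∀ a : A,
      Tendsto (fun N => ((∑ n ∈ Finset.range N, t n * star (t n)) : 𝓜(ℂ, A)).fst a)
        atTop (nhds a) ∧
      Tendsto (fun N => ((∑ n ∈ Finset.range N, t n * star (t n)) : 𝓜(ℂ, A)).snd a)
        atTop (nhds a))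
    (δs δt : 𝓜(ℂ, A) → 𝓜(ℂ, A))
    (hδs : ∀ x : 𝓜(ℂ, A), ∀ a : A,
      Tendsto (fun N => ((∑ n ∈ Finset.range N, s n * x * star (s n)) : 𝓜(ℂ, A)).fst a)
        atTop (nhds ((δs x).fst a)) ∧
      Tendsto (fun N => ((∑ n ∈ Finset.range N, s n * x * star (s n)) : 𝓜(ℂ, A)).snd a)
        atTop (nhds ((δs x).snd a)))
    (hδt : ∀ x : 𝓜(ℂ, A), ∀ a : A,
      Tendsto (fun N => ((∑ n ∈ Finset.range N, t n * x * star (t n)) : 𝓜(ℂ, A)).fst a)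
        atTop (nhds ((δt x).fst a)) ∧
      Tendsto (fun N => ((∑ n ∈ Finset.range N, t n * x * star (t n)) : 𝓜(ℂ, A)).snd a)
        atTop (nhds ((δt x).snd a))) :
    (∀ x : 𝓜(ℂ, A), (∀ a : A, x.fst a ∈ J) ↔ (∀ a : A, (δs x).fst a ∈ J)) ∧
    (∃ u : 𝓜(ℂ, A), u * star u = 1 ∧ star u * u = 1 ∧
      ∀ x : 𝓜(ℂ, A), u * δs x * star u = δt x) := by
  constructor
  · -- Part 1 : the ideal statement
    intro x
    constructor
    · intro hx a
      refine hJ.mem_of_tendsto (hδs x a).1 (Eventually.of_forall fun N => ?_)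
      rw [dc_sum_fst]
      refine sum_mem fun n _ => ?_
      rw [dc_fst_mul, dc_fst_mul]
      exact dc_fst_mem_ideal J hJ (s n) (hx _)
    · intro h a
      have key : (δs x).fst ((s 0).fst a) = (s 0).fst (x.fst a) := by
        have h1 := (hδs x ((s 0).fst a)).1
        have h2 : ∀ N, 1 ≤ N →
            ((∑ n ∈ Finset.range N, s n * x * star (s n) : 𝓜(ℂ, A))).fst ((s 0).fst a)
              = (s 0).fst (x.fst a) := by
          intro N hN
          have h3 : (∑ n ∈ Finset.range N, s n * x * star (s n) : 𝓜(ℂ, A)) * s 0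
              = s 0 * x :=
            dc_sum_mul_single (fun n => s n * x) s hs_isom hs_orth hN
          calc ((∑ n ∈ Finset.range N, s n * x * star (s n) : 𝓜(ℂ, A))).fst ((s 0).fst a)
              = ((∑ n ∈ Finset.range N, s n * x * star (s n) : 𝓜(ℂ, A)) * s 0).fst a :=
                (dc_fst_mul _ _ a).symm
            _ = (s 0 * x).fst a := by rw [h3]
            _ = (s 0).fst (x.fst a) := dc_fst_mul _ _ a
        exact tendsto_nhds_unique h1 (tendsto_atTop_of_eventually_const (i₀ := 1) h2)
      have h5 : x.fst a = (star (s 0)).fst ((δs x).fst ((s 0).fst a)) := by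
        rw [key, ← dc_fst_mul, hs_isom 0, dc_one_fst]
      rw [h5]
      exact dc_fst_mem_ideal J hJ _ (h _)
  · -- Part 2 : uniqueness up to unitary equivalence
    obtain ⟨u, huf, hus⟩ := dc_key_construct s t hs_isom hs_orth ht_isom ht_orth
      (fun a => (hs_sum a).1) (fun a => (ht_sum a).1)
    obtain ⟨v, hvf, hvs⟩ := dc_key_construct t s ht_isom ht_orth hs_isom hs_orth
      (fun a => (ht_sum a).1) (fun a => (hs_sum a).1)
    -- star u = v
    have hstar : star u = v := by
      refine dc_ext_fst fun a => ?_
      have h1 : Tendsto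
          (fun N => star (((∑ n ∈ Finset.range N, t n * star (s n)) : 𝓜(ℂ, A)).snd (star a)))
          atTop (𝓝 (star (u.snd (star a)))) :=
        (continuous_star.tendsto _).comp (hus (star a))
      have h2 : (fun N =>
            star (((∑ n ∈ Finset.range N, t n * star (s n)) : 𝓜(ℂ, A)).snd (star a)))
          = fun N => ((∑ n ∈ Finset.range N, s n * star (t n)) : 𝓜(ℂ, A)).fst a := by
        funext N
        rw [← dc_star_sum s t, DoubleCentralizer.star_fst]
      rw [h2] at h1
      rw [DoubleCentralizer.star_fst]
      exact tendsto_nhds_unique h1 (hvf a)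
    -- the inner product identity for u
    have hid_u : ∀ c d : A, star (u.fst c) * u.fst d = star c * d := by
      intro c d
      have h1 : Tendsto (fun N =>
          star (((∑ n ∈ Finset.range N, t n * star (s n)) : 𝓜(ℂ, A)).fst c)
            * ((∑ n ∈ Finset.range N, t n * star (s n)) : 𝓜(ℂ, A)).fst d)
          atTop (𝓝 (star (u.fst c) * u.fst d)) :=
        ((continuous_star.tendsto _).comp (huf c)).mul (huf d)
      have h2 : ∀ N : ℕ,
          star (((∑ n ∈ Finset.range N, t n * star (s n)) : 𝓜(ℂ, A)).fst c)
            * ((∑ n ∈ Finset.range N, t n * star (s n)) : 𝓜(ℂ, A)).fst d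
          = star c * ((∑ n ∈ Finset.range N, s n * star (s n) : 𝓜(ℂ, A))).fst d := by
        intro N
        have h3 : star ((∑ n ∈ Finset.range N, t n * star (s n)) : 𝓜(ℂ, A))
            * ((∑ n ∈ Finset.range N, t n * star (s n)) : 𝓜(ℂ, A))
            = (∑ n ∈ Finset.range N, s n * star (s n) : 𝓜(ℂ, A)) := by
          rw [dc_star_sum s t]
          exact dc_sum_mul_orth s s t ht_isom ht_orth _
        rw [dc_star_fst_mul_fst, h3]
      rw [funext h2] at h1
      exact tendsto_nhds_unique h1 ((hs_sum d).1.const_mul (star c))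
    -- the inner product identity for v
    have hid_v : ∀ c d : A, star (v.fst c) * v.fst d = star c * d := by
      intro c d
      have h1 : Tendsto (fun N =>
          star (((∑ n ∈ Finset.range N, s n * star (t n)) : 𝓜(ℂ, A)).fst c)
            * ((∑ n ∈ Finset.range N, s n * star (t n)) : 𝓜(ℂ, A)).fst d)
          atTop (𝓝 (star (v.fst c) * v.fst d)) :=
        ((continuous_star.tendsto _).comp (hvf c)).mul (hvf d)
      have h2 : ∀ N : ℕ,
          star (((∑ n ∈ Finset.range N, s n * star (t n)) : 𝓜(ℂ, A)).fst c)
            * ((∑ n ∈ Finset.range N, s n * star (t n)) : 𝓜(ℂ, A)).fst d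
          = star c * ((∑ n ∈ Finset.range N, t n * star (t n) : 𝓜(ℂ, A))).fst d := by
        intro N
        have h3 : star ((∑ n ∈ Finset.range N, s n * star (t n)) : 𝓜(ℂ, A))
            * ((∑ n ∈ Finset.range N, s n * star (t n)) : 𝓜(ℂ, A))
            = (∑ n ∈ Finset.range N, t n * star (t n) : 𝓜(ℂ, A)) := by
          rw [dc_star_sum t s]
          exact dc_sum_mul_orth t t s hs_isom hs_orth _
        rw [dc_star_fst_mul_fst, h3]
      rw [funext h2] at h1
      exact tendsto_nhds_unique h1 ((ht_sum d).1.const_mul (star c))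
    -- unitarity
    have unit : ∀ w : 𝓜(ℂ, A), (∀ c d : A, star (w.fst c) * w.fst d = star c * d) →
        star w * w = 1 := by
      intro w hw
      refine dc_ext_fst fun a => ?_
      rw [dc_one_fst, dc_fst_mul]
      refine dc_cancel_left fun c => ?_
      rw [← (star w).central, DoubleCentralizer.star_snd, hw (star c) a, star_star]
    have h_uu : star u * u = 1 := unit u hid_u
    have h_vv : star v * v = 1 := unit v hid_v
    have h_uu' : u * star u = 1 := by
      calc u * star u = star (star u) * star u := by rw [star_star]
        _ = star v * v := by rw [hstar]
        _ = 1 := h_vv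
    -- u * s n = t n
    have hus_eq : ∀ n, u * s n = t n := by
      intro n
      refine dc_ext_fst fun a => ?_
      rw [dc_fst_mul]
      have h1 : Tendsto
          (fun N => ((∑ n ∈ Finset.range N, t n * star (s n)) : 𝓜(ℂ, A)).fst ((s n).fst a))
          atTop (𝓝 (u.fst ((s n).fst a))) := huf _
      have h2 : ∀ N, n + 1 ≤ N →
          ((∑ m ∈ Finset.range N, t m * star (s m)) : 𝓜(ℂ, A)).fst ((s n).fst a)
            = (t n).fst a := by
        intro N hN
        rw [← dc_fst_mul, dc_sum_mul_single t s hs_isom hs_orth (Nat.lt_of_succ_le hN)]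
      exact tendsto_nhds_unique h1 (tendsto_atTop_of_eventually_const (i₀ := n + 1) h2)
    refine ⟨u, h_uu', h_uu, fun x => ?_⟩
    refine dc_ext_fst fun a => ?_
    have h1 : Tendsto (fun N => u.fst
        (((∑ n ∈ Finset.range N, s n * x * star (s n)) : 𝓜(ℂ, A)).fst ((star u).fst a)))
        atTop (𝓝 (u.fst ((δs x).fst ((star u).fst a)))) :=
      (u.fst.continuous.tendsto _).comp ((hδs x ((star u).fst a)).1)
    have h2 : ∀ N : ℕ, u.fst
        (((∑ n ∈ Finset.range N, s n * x * star (s n)) : 𝓜(ℂ, A)).fst ((star u).fst a))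
        = ((∑ n ∈ Finset.range N, t n * x * star (t n)) : 𝓜(ℂ, A)).fst a := by
      intro N
      have h3 : u * ((∑ n ∈ Finset.range N, s n * x * star (s n)) : 𝓜(ℂ, A)) * star u
          = ((∑ n ∈ Finset.range N, t n * x * star (t n)) : 𝓜(ℂ, A)) := by
        rw [Finset.mul_sum, Finset.sum_mul]
        refine Finset.sum_congr rfl fun n _ => ?_
        rw [← hus_eq n, star_mul]
        simp only [mul_assoc]
      rw [← dc_fst_mul, ← dc_fst_mul, h3]
    rw [funext h2] at h1
    rw [dc_fst_mul, dc_fst_mul]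
    exact tendsto_nhds_unique ((hδt x a).1) h1 |>.symm
end

section
/- Let (Γ, Γ₊, 1) be the partially ordered abelian group of Δ-valued functions arising from (P, μ, Δ) as described. Then (Γ, Γ₊, 1) is a Riesz group with order unit 1: Γ₊ generates Γ, 1 is an order unit, and Γ satisfies Riesz interpolation (if ρ₁, ρ₂ ≤ σ₁, σ₂ then there exists η with ρ₁, ρ₂ ≤ η ≤ σ₁, σ₂). -/
open Set MeasureTheory

/-!
Closure under subtraction, positive generation and the order-unit property are routine: an element
of `Γ` is a constant plus a compactly supported locally constant function, hence bounded.

For Riesz interpolation put `τ = ρ₁ ⊔ ρ₂ ≤ σ = σ₁ ⊓ σ₂`. Off a compact set `τ` is the constant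
`r = r₁ ⊔ r₂` and `σ` the constant `s = s₁ ⊓ s₂`, with `∫ (τ - r) ≥ 0 ≥ ∫ (σ - s)`. Choose `L n`
containing both supports and redefine `τ` off `L n` as `t = r + μ(L n)⁻¹ ∫ (τ - r)`; this lies in
`Δ` because `∫ (τ - r)` is a `Δ`-combination of measures of compact open fibres. The choice of
`t` makes the integral of the new function minus `t` vanish, `r ≤ t` is clear, and `t ≤ s` follows
from `∫ (τ - r) ≤ ∫ (σ - s) + μ(L n) (s - r)`.
-/

/-- Membership in the group `Γ` of Definition D:G: `η : P → ℝ` is locally constant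
(i.e. continuous into the discrete group `Δ`), takes values in `Δ`, and differs from
some constant `r ∈ Δ` by a compactly supported function of integral zero. -/
def MemGamma {P : Type*} [TopologicalSpace P] [MeasurableSpace P]
    (μ : Measure P) (Δ : AddSubgroup ℝ) (η : P → ℝ) : Prop :=
  IsLocallyConstant η ∧ (∀ x, η x ∈ Δ) ∧
    ∃ r ∈ Δ, HasCompactSupport (fun x => η x - r) ∧ (∫ x, (η x - r) ∂μ) = 0

section Topology

variable {X Y : Type*} [TopologicalSpace X]

lemma IsLocallyConstant.piecewise {s : Set X} [DecidablePred (· ∈ s)] (hs : IsClopen s)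
    {f g : X → Y} (hf : IsLocallyConstant f) (hg : IsLocallyConstant g) :
    IsLocallyConstant (s.piecewise f g) := fun U => by
  rw [piecewise_preimage, Set.ite, sdiff_eq]
  exact ((hf U).inter hs.isOpen).union ((hg U).inter hs.compl.isOpen)

lemma IsLocallyConstant.finite_range_of_hasCompactSupport [Zero Y] {f : X → Y}
    (hf : IsLocallyConstant f) (hc : HasCompactSupport f) : (range f).Finite := by
  have : CompactSpace ↥(tsupport f) := isCompact_iff_compactSpace.mp hc
  have hfin := (hf.comp_continuous (continuous_subtype_val (p := (· ∈ tsupport f)))).range_finite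
  refine (hfin.insert 0).subset ?_
  rintro _ ⟨x, rfl⟩
  by_cases hx : x ∈ tsupport f
  · exact mem_insert_of_mem _ ⟨⟨x, hx⟩, rfl⟩
  · exact mem_insert_iff.mpr (Or.inl (image_eq_zero_of_notMem_tsupport hx))

lemma HasCompactSupport.comp₂_sub_const {f g : X → ℝ} {a b : ℝ} (op : ℝ → ℝ → ℝ)
    (hf : HasCompactSupport fun x => f x - a)
    (hg : HasCompactSupport fun x => g x - b) :
    HasCompactSupport fun x => op (f x) (g x) - op a b := by
  simpa using hf.comp₂_left hg (m := fun u v => op (u + a) (v + b) - op a b) (by simp)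

end Topology

section Integral

variable {X : Type*} [TopologicalSpace X] [MeasurableSpace X] [OpensMeasurableSpace X]
  {μ : Measure X} [IsFiniteMeasureOnCompacts μ]

lemma IsLocallyConstant.integrable_of_hasCompactSupport {f : X → ℝ}
    (hf : IsLocallyConstant f) (hc : HasCompactSupport f) : Integrable f μ :=
  hf.continuous.integrable_of_hasCompactSupport hc

lemma IsLocallyConstant.integrable_sub_const {f : X → ℝ} (hf : IsLocallyConstant f) {r : ℝ}
    (hc : HasCompactSupport fun x => f x - r) : Integrable (fun x => f x - r) μ :=
  (hf.comp (· - r)).integrable_of_hasCompactSupport hc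

lemma integral_mem_of_isLocallyConstant (Δ : AddSubgroup ℝ)
    (hΔmul : ∀ r ∈ Δ, ∀ K : Set X, IsCompact K → IsOpen K → (μ K).toReal * r ∈ Δ)
    {f : X → ℝ} (hf : IsLocallyConstant f) (hc : HasCompactSupport f) (hfΔ : ∀ x, f x ∈ Δ) :
    ∫ x, f x ∂μ ∈ Δ := by
  classical
  let F : SimpleFunc X ℝ :=
    ⟨f, fun y => (hf {y}).measurableSet, hf.finite_range_of_hasCompactSupport hc⟩
  have hF : ∫ x, f x ∂μ = F.integral μ :=
    (F.integral_eq_integral (hf.integrable_of_hasCompactSupport hc)).symm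
  rw [hF, SimpleFunc.integral_eq_sum_filter]
  refine Δ.sum_mem fun y hy => ?_
  obtain ⟨hyF, hy0⟩ := Finset.mem_filter.mp hy
  obtain ⟨x, rfl⟩ := F.mem_range.mp hyF
  have hfiber : IsCompact (f ⁻¹' {f x}) :=
    hc.of_isClosed_subset (hf.isClosed_fiber (f x)) fun z hz => subset_tsupport f <| by
      rw [Function.mem_support, show f z = f x from hz]; exact hy0
  exact hΔmul _ (hfΔ x) _ hfiber (hf _)

end Integral

section Indicator

variable {X : Type*} [MeasurableSpace X] {μ : Measure X}

lemma integral_sub_indicator_const {f : X → ℝ} (hf : Integrable f μ) {L : Set X}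
    (hL : MeasurableSet L) (hμL : μ L ≠ ⊤) (a : ℝ) :
    ∫ x, (f x - L.indicator (fun _ => a) x) ∂μ = ∫ x, f x ∂μ - μ.real L * a := by
  rw [integral_sub hf ((integrableOn_const hμL).integrable_indicator hL),
    integral_indicator_const _ hL, smul_eq_mul]

lemma integral_sub_const_le_of_le {L : Set X} (hL : MeasurableSet L) (hμL : μ L ≠ ⊤)
    {τ σ : X → ℝ} {r s : ℝ} (hτ : Integrable (fun x => τ x - r) μ)
    (hσ : Integrable (fun x => σ x - s) μ) (hτσ : ∀ x, τ x ≤ σ x)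
    (hτL : ∀ x ∉ L, τ x = r) (hσL : ∀ x ∉ L, σ x = s) :
    ∫ x, (τ x - r) ∂μ ≤ ∫ x, (σ x - s) ∂μ + μ.real L * (s - r) := by
  have hle : ∀ x, τ x - r ≤ σ x - s - L.indicator (fun _ => r - s) x := fun x => by
    by_cases hx : x ∈ L
    · simp only [indicator_of_mem hx]; linarith [hτσ x]
    · simp [indicator_of_notMem hx, hτL x hx, hσL x hx]
  calc ∫ x, (τ x - r) ∂μ
      ≤ ∫ x, (σ x - s - L.indicator (fun _ => r - s) x) ∂μ :=
        integral_mono hτ (hσ.sub ((integrableOn_const hμL).integrable_indicator hL)) hle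
    _ = ∫ x, (σ x - s) ∂μ + μ.real L * (s - r) := by
        rw [integral_sub_indicator_const hσ hL hμL]; ring

end Indicator

namespace MemGamma

variable {P : Type*} [TopologicalSpace P] [MeasurableSpace P] {μ : Measure P}
  {Δ : AddSubgroup ℝ} {η η₁ η₂ : P → ℝ}

lemma const {c : ℝ} (hc : c ∈ Δ) : MemGamma μ Δ (fun _ => c) :=
  ⟨.const c, fun _ => hc, c, hc, by simp only [sub_self]; exact .zero, by simp⟩

lemma sub [OpensMeasurableSpace P] [IsFiniteMeasureOnCompacts μ]
    (h₁ : MemGamma μ Δ η₁) (h₂ : MemGamma μ Δ η₂) : MemGamma μ Δ (η₁ - η₂) := by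
  obtain ⟨hlc₁, hΔ₁, r₁, hr₁, hcs₁, hint₁⟩ := h₁
  obtain ⟨hlc₂, hΔ₂, r₂, hr₂, hcs₂, hint₂⟩ := h₂
  have hsplit : (fun x => (η₁ - η₂) x - (r₁ - r₂)) = fun x => (η₁ x - r₁) - (η₂ x - r₂) := by
    funext x; simp only [Pi.sub_apply]; ring
  refine ⟨hlc₁.sub hlc₂, fun x => sub_mem (hΔ₁ x) (hΔ₂ x), r₁ - r₂, sub_mem hr₁ hr₂, ?_, ?_⟩
  · rw [hsplit]; exact hcs₁.sub hcs₂
  · rw [hsplit, integral_sub (hlc₁.integrable_sub_const hcs₁) (hlc₂.integrable_sub_const hcs₂),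
      hint₁, hint₂, sub_zero]

lemma exists_le_nat (h : MemGamma μ Δ η) : ∃ N : ℕ, ∀ x, η x ≤ N := by
  obtain ⟨hlc, -, r, -, hcs, -⟩ := h
  obtain ⟨C, hC⟩ := (hlc.comp (· - r)).continuous.bounded_above_of_compact_support hcs
  refine ⟨⌈C + r⌉₊, fun x => ?_⟩
  have : η x - r ≤ C := (Real.le_norm_self _).trans (hC x)
  linarith [Nat.le_ceil (C + r)]

lemma exists_nonneg_sub_eq [OpensMeasurableSpace P] [IsFiniteMeasureOnCompacts μ]
    (hΔone : (1 : ℝ) ∈ Δ) (h : MemGamma μ Δ η) :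
    ∃ η₁ η₂ : P → ℝ, MemGamma μ Δ η₁ ∧ MemGamma μ Δ η₂ ∧
      (∀ x, 0 ≤ η₁ x) ∧ (∀ x, 0 ≤ η₂ x) ∧ η = η₁ - η₂ := by
  obtain ⟨N, hN⟩ := ((const Δ.zero_mem).sub h).exists_le_nat
  have hNΔ : (N : ℝ) ∈ Δ := by simpa using Δ.nsmul_mem hΔone N
  refine ⟨η - fun _ => -(N : ℝ), fun _ => N, h.sub (const (neg_mem hNΔ)), const hNΔ,
    fun x => ?_, fun _ => N.cast_nonneg, by funext x; simp⟩
  have := hN x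
  simp only [Pi.sub_apply] at this ⊢
  linarith

end MemGamma

section Interpolation

variable {P : Type*} [TopologicalSpace P] [MeasurableSpace P] [OpensMeasurableSpace P]
  {μ : Measure P} [IsFiniteMeasureOnCompacts μ] {Δ : AddSubgroup ℝ}

lemma MemGamma.exists_integral_sup_sub_nonneg {ρ₁ ρ₂ : P → ℝ} (h₁ : MemGamma μ Δ ρ₁)
    (h₂ : MemGamma μ Δ ρ₂) : ∃ r ∈ Δ, HasCompactSupport (fun x => (ρ₁ ⊔ ρ₂) x - r) ∧
      0 ≤ ∫ x, ((ρ₁ ⊔ ρ₂) x - r) ∂μ := by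
  obtain ⟨hlc₁, -, r₁, hr₁, hcs₁, hint₁⟩ := h₁
  obtain ⟨hlc₂, -, r₂, hr₂, hcs₂, hint₂⟩ := h₂
  have hcs : HasCompactSupport fun x => (ρ₁ ⊔ ρ₂) x - r₁ ⊔ r₂ := hcs₁.comp₂_sub_const max hcs₂
  have hi : Integrable (fun x => (ρ₁ ⊔ ρ₂) x - r₁ ⊔ r₂) μ :=
    (hlc₁.comp₂ hlc₂ max).integrable_sub_const hcs
  refine ⟨r₁ ⊔ r₂, ?_, hcs, ?_⟩ <;> rcases max_choice r₁ r₂ with h | h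
  · rwa [h]
  · rwa [h]
  · rw [← hint₁]
    exact integral_mono (hlc₁.integrable_sub_const hcs₁) hi fun x => by simp [h]
  · rw [← hint₂]
    exact integral_mono (hlc₂.integrable_sub_const hcs₂) hi fun x => by simp [h]

lemma MemGamma.exists_integral_inf_sub_nonpos {σ₁ σ₂ : P → ℝ} (h₁ : MemGamma μ Δ σ₁)
    (h₂ : MemGamma μ Δ σ₂) : ∃ s, HasCompactSupport (fun x => (σ₁ ⊓ σ₂) x - s) ∧
      ∫ x, ((σ₁ ⊓ σ₂) x - s) ∂μ ≤ 0 := by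
  obtain ⟨hlc₁, -, s₁, -, hcs₁, hint₁⟩ := h₁
  obtain ⟨hlc₂, -, s₂, -, hcs₂, hint₂⟩ := h₂
  have hcs : HasCompactSupport fun x => (σ₁ ⊓ σ₂) x - s₁ ⊓ s₂ := hcs₁.comp₂_sub_const min hcs₂
  have hi : Integrable (fun x => (σ₁ ⊓ σ₂) x - s₁ ⊓ s₂) μ :=
    (hlc₁.comp₂ hlc₂ min).integrable_sub_const hcs
  refine ⟨s₁ ⊓ s₂, hcs, ?_⟩
  rcases min_choice s₁ s₂ with h | h
  · rw [← hint₁]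
    exact integral_mono hi (hlc₁.integrable_sub_const hcs₁) fun x => by simp [h]
  · rw [← hint₂]
    exact integral_mono hi (hlc₂.integrable_sub_const hcs₂) fun x => by simp [h]

lemma memGamma_piecewise [T2Space P] {L : Set P} [DecidablePred (· ∈ L)] (hLc : IsCompact L)
    (hLo : IsOpen L) {τ : P → ℝ} {r t : ℝ} (hτ : IsLocallyConstant τ) (hτΔ : ∀ x, τ x ∈ Δ)
    (hτL : ∀ x ∉ L, τ x = r) (ht : t ∈ Δ) (hint : ∫ x, (τ x - r) ∂μ = μ.real L * (t - r)) :
    MemGamma μ Δ (L.piecewise τ fun _ => t) := by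
  have hcs : HasCompactSupport fun x => τ x - r :=
    .intro hLc fun x hx => sub_eq_zero.mpr (hτL x hx)
  have hsplit : (fun x => L.piecewise τ (fun _ => t) x - t) =
      fun x => (τ x - r) - L.indicator (fun _ => t - r) x := by
    funext x; by_cases hx : x ∈ L <;> simp [hx, hτL]
  refine ⟨hτ.piecewise ⟨hLc.isClosed, hLo⟩ (.const t), fun x => ?_, t, ht,
    .intro hLc fun x hx => by simp [hx], ?_⟩
  · by_cases hx : x ∈ L <;> simp [hx, hτΔ, ht]
  · rw [hsplit, integral_sub_indicator_const (hτ.integrable_sub_const hcs) hLo.measurableSet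
      hLc.measure_ne_top, hint, sub_self]

theorem exists_memGamma_between [T2Space P] {L : ℕ → Set P} (hLmono : Monotone L)
    (hLc : ∀ n, IsCompact (L n)) (hLo : ∀ n, IsOpen (L n)) (hLunion : ⋃ n, L n = univ)
    (hμL : ∀ n, μ (L n) ≠ 0)
    (hΔmul : ∀ r ∈ Δ, ∀ K : Set P, IsCompact K → IsOpen K → (μ K).toReal * r ∈ Δ)
    (hΔdiv : ∀ r ∈ Δ, ∀ n : ℕ, ((μ (L n)).toReal)⁻¹ * r ∈ Δ)
    {τ σ : P → ℝ} (hτ : IsLocallyConstant τ) (hτΔ : ∀ x, τ x ∈ Δ) (hσ : Continuous σ)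
    (hτσ : ∀ x, τ x ≤ σ x) {r s : ℝ} (hr : r ∈ Δ) (hτr : HasCompactSupport fun x => τ x - r)
    (hτint : 0 ≤ ∫ x, (τ x - r) ∂μ) (hσs : HasCompactSupport fun x => σ x - s)
    (hσint : ∫ x, (σ x - s) ∂μ ≤ 0) :
    ∃ η, MemGamma μ Δ η ∧ (∀ x, τ x ≤ η x) ∧ (∀ x, η x ≤ σ x) := by
  classical
  obtain ⟨n, hn⟩ : ∃ n, tsupport (fun x => τ x - r) ∪ tsupport (fun x => σ x - s) ⊆ L n :=
    (hτr.union hσs).elim_directed_cover L hLo (hLunion ▸ subset_univ _) hLmono.directed_le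
  have hτL : ∀ x ∉ L n, τ x = r := fun x hx => sub_eq_zero.mp <|
    image_eq_zero_of_notMem_tsupport (f := fun x => τ x - r) fun h => hx (hn (.inl h))
  have hσL : ∀ x ∉ L n, σ x = s := fun x hx => sub_eq_zero.mp <|
    image_eq_zero_of_notMem_tsupport (f := fun x => σ x - s) fun h => hx (hn (.inr h))
  set c := ∫ x, (τ x - r) ∂μ
  set m := μ.real (L n)
  have hm : 0 < m := ENNReal.toReal_pos (hμL n) (hLc n).measure_ne_top
  have hcΔ : c ∈ Δ :=
    integral_mem_of_isLocallyConstant Δ hΔmul (hτ.comp (· - r)) hτr fun x => sub_mem (hτΔ x) hr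
  have hσi : Integrable (fun x => σ x - s) μ :=
    (hσ.sub continuous_const).integrable_of_hasCompactSupport hσs
  have hc : c ≤ m * (s - r) := by
    linarith [integral_sub_const_le_of_le (hLo n).measurableSet ((hLc n).measure_ne_top (μ := μ))
      (hτ.integrable_sub_const hτr) hσi hτσ hτL hσL]
  set t := r + m⁻¹ * c
  have hrt : r ≤ t := le_add_of_nonneg_right (mul_nonneg (inv_nonneg.mpr hm.le) hτint)
  have hts : t ≤ s := by
    have : m⁻¹ * c ≤ s - r := by rwa [inv_mul_le_iff₀ hm]
    linarith
  have hmt : c = m * (t - r) := by simp only [t]; field_simp; ring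
  refine ⟨(L n).piecewise τ fun _ => t, memGamma_piecewise (hLc n) (hLo n) hτ hτΔ hτL
    (add_mem hr (hΔdiv c hcΔ n)) hmt, fun x => ?_, fun x => ?_⟩ <;>
    by_cases hx : x ∈ L n <;> simp [hx, hτσ, hτL, hσL, hrt, hts]

end Interpolation

theorem gamma_is_riesz_group_general
    {P : Type*} [TopologicalSpace P] [T2Space P]
    [MeasurableSpace P] [BorelSpace P]
    (μ : Measure P)
    (hμpos : ∀ U : Set P, IsOpen U → U.Nonempty → 0 < μ U)
    (hμfin : ∀ K : Set P, IsCompact K → μ K ≠ ⊤)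
    (L : ℕ → Set P) (hLmono : Monotone L)
    (hL : ∀ n, IsCompact (L n) ∧ IsOpen (L n) ∧ (L n).Nonempty)
    (hLunion : (⋃ n, L n) = Set.univ)
    (Δ : AddSubgroup ℝ) (hΔone : (1 : ℝ) ∈ Δ)
    (hΔmul : ∀ r ∈ Δ, ∀ K : Set P, IsCompact K → IsOpen K → (μ K).toReal * r ∈ Δ)
    (hΔdiv : ∀ r ∈ Δ, ∀ n : ℕ, ((μ (L n)).toReal)⁻¹ * r ∈ Δ) :
    -- the order unit `1` lies in `Γ`
    MemGamma μ Δ (fun _ => (1 : ℝ)) ∧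
    -- `Γ` is a group
    ((MemGamma μ Δ (0 : P → ℝ)) ∧
      ∀ η₁ η₂ : P → ℝ, MemGamma μ Δ η₁ → MemGamma μ Δ η₂ → MemGamma μ Δ (η₁ - η₂)) ∧
    -- `Γ₊` generates `Γ`
    (∀ η : P → ℝ, MemGamma μ Δ η → ∃ η₁ η₂ : P → ℝ,
      MemGamma μ Δ η₁ ∧ MemGamma μ Δ η₂ ∧
      (∀ x, 0 ≤ η₁ x) ∧ (∀ x, 0 ≤ η₂ x) ∧ η = η₁ - η₂) ∧
    -- `1` is an order unit
    (∀ η : P → ℝ, MemGamma μ Δ η → ∃ N : ℕ, ∀ x, η x ≤ N) ∧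
    -- Riesz interpolation
    (∀ ρ₁ ρ₂ σ₁ σ₂ : P → ℝ, MemGamma μ Δ ρ₁ → MemGamma μ Δ ρ₂ →
      MemGamma μ Δ σ₁ → MemGamma μ Δ σ₂ →
      (∀ x, ρ₁ x ≤ σ₁ x) → (∀ x, ρ₁ x ≤ σ₂ x) →
      (∀ x, ρ₂ x ≤ σ₁ x) → (∀ x, ρ₂ x ≤ σ₂ x) →
      ∃ η : P → ℝ, MemGamma μ Δ η ∧
        (∀ x, ρ₁ x ≤ η x) ∧ (∀ x, ρ₂ x ≤ η x) ∧
        (∀ x, η x ≤ σ₁ x) ∧ (∀ x, η x ≤ σ₂ x)) := by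
  have : IsFiniteMeasureOnCompacts μ := ⟨fun K hK => (hμfin K hK).lt_top⟩
  refine ⟨.const hΔone, ⟨.const Δ.zero_mem, fun _ _ => .sub⟩,
    fun _ hη => hη.exists_nonneg_sub_eq hΔone, fun _ hη => hη.exists_le_nat, ?_⟩
  intro ρ₁ ρ₂ σ₁ σ₂ hρ₁ hρ₂ hσ₁ hσ₂ h₁₁ h₁₂ h₂₁ h₂₂
  obtain ⟨r, hr, hτr, hτint⟩ := hρ₁.exists_integral_sup_sub_nonneg hρ₂
  obtain ⟨s, hσs, hσint⟩ := hσ₁.exists_integral_inf_sub_nonpos hσ₂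
  have hτΔ : ∀ x, (ρ₁ ⊔ ρ₂) x ∈ Δ := fun x => by
    rcases max_choice (ρ₁ x) (ρ₂ x) with h | h <;> simp only [Pi.sup_apply, h]
    exacts [hρ₁.2.1 x, hρ₂.2.1 x]
  obtain ⟨η, hη, hτη, hησ⟩ := exists_memGamma_between hLmono (fun n => (hL n).1)
    (fun n => (hL n).2.1) hLunion (fun n => (hμpos _ (hL n).2.1 (hL n).2.2).ne') hΔmul hΔdiv
    (hρ₁.1.comp₂ hρ₂.1 max) hτΔ (hσ₁.1.comp₂ hσ₂.1 min).continuous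
    (fun x => max_le (le_min (h₁₁ x) (h₁₂ x)) (le_min (h₂₁ x) (h₂₂ x))) hr hτr hτint hσs hσint
  exact ⟨η, hη, fun x => (le_max_left _ _).trans (hτη x), fun x => (le_max_right _ _).trans (hτη x),
    fun x => (hησ x).trans (min_le_left _ _), fun x => (hησ x).trans (min_le_right _ _)⟩

/-- `(Γ, Γ₊, 1)` is a Riesz group with order unit `1`: the constant function `1`
belongs to `Γ`, `Γ` is a group, `Γ₊` generates `Γ`, `1` is an order unit, and
Riesz interpolation holds. -/
theorem gamma_is_riesz_group
    {P : Type*} [TopologicalSpace P] [T2Space P] [LocallyCompactSpace P]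
    [SecondCountableTopology P] [TotallyDisconnectedSpace P] [NoncompactSpace P]
    [MeasurableSpace P] [BorelSpace P]
    (μ : Measure P)
    (hμpos : ∀ U : Set P, IsOpen U → U.Nonempty → 0 < μ U)
    (hμfin : ∀ K : Set P, IsCompact K → μ K ≠ ⊤)
    (L : ℕ → Set P) (hLmono : Monotone L)
    (hL : ∀ n, IsCompact (L n) ∧ IsOpen (L n) ∧ (L n).Nonempty)
    (hLunion : (⋃ n, L n) = Set.univ)
    (Δ : AddSubgroup ℝ) (hΔctble : Countable Δ) (hΔone : (1 : ℝ) ∈ Δ)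
    (hΔmul : ∀ r ∈ Δ, ∀ K : Set P, IsCompact K → IsOpen K → (μ K).toReal * r ∈ Δ)
    (hΔdiv : ∀ r ∈ Δ, ∀ n : ℕ, ((μ (L n)).toReal)⁻¹ * r ∈ Δ) :
    -- the order unit `1` lies in `Γ`
    MemGamma μ Δ (fun _ => (1 : ℝ)) ∧
    -- `Γ` is a group
    ((MemGamma μ Δ (0 : P → ℝ)) ∧
      ∀ η₁ η₂ : P → ℝ, MemGamma μ Δ η₁ → MemGamma μ Δ η₂ → MemGamma μ Δ (η₁ - η₂)) ∧
    -- `Γ₊` generates `Γ`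
    (∀ η : P → ℝ, MemGamma μ Δ η → ∃ η₁ η₂ : P → ℝ,
      MemGamma μ Δ η₁ ∧ MemGamma μ Δ η₂ ∧
      (∀ x, 0 ≤ η₁ x) ∧ (∀ x, 0 ≤ η₂ x) ∧ η = η₁ - η₂) ∧
    -- `1` is an order unit
    (∀ η : P → ℝ, MemGamma μ Δ η → ∃ N : ℕ, ∀ x, η x ≤ N) ∧
    -- Riesz interpolation
    (∀ ρ₁ ρ₂ σ₁ σ₂ : P → ℝ, MemGamma μ Δ ρ₁ → MemGamma μ Δ ρ₂ →
      MemGamma μ Δ σ₁ → MemGamma μ Δ σ₂ →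
      (∀ x, ρ₁ x ≤ σ₁ x) → (∀ x, ρ₁ x ≤ σ₂ x) →
      (∀ x, ρ₂ x ≤ σ₁ x) → (∀ x, ρ₂ x ≤ σ₂ x) →
      ∃ η : P → ℝ, MemGamma μ Δ η ∧
        (∀ x, ρ₁ x ≤ η x) ∧ (∀ x, ρ₂ x ≤ η x) ∧
        (∀ x, η x ≤ σ₁ x) ∧ (∀ x, η x ≤ σ₂ x)) :=
  gamma_is_riesz_group_general μ hμpos hμfin L hLmono hL hLunion Δ hΔone hΔmul hΔdiv
end

section
/- Let m, n, d, k be nonnegative integers with m + n + 1 ≤ d and 0 ≤ k ≤ n. Let K ⊆ ℝ^d be a finite union of images of subsets of ℝ^m under affine maps, and let h : ℝⁿ → ℝ^d be an affine map injective on [0,1]^k × {0}. For η = (η_{k+1},…,η_n) ∈ (ℝ^d)^{n−k}, let h_η be the affine map agreeing with h at 0 and at the first k standard basis vectors, and sending the j-th standard basis vector to η_j for j > k. Then the set of η for which h_η is injective and h_η([0,1]ⁿ \ ([0,1]^k × {0})) is disjoint from K contains a dense open subset of (ℝ^d)^{n−k}. -/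
open Set

/-- `f : ℝⁿ → ℝ^d` is an affine map. -/
def IsAffineMapR {n d : ℕ} (f : (Fin n → ℝ) → (Fin d → ℝ)) : Prop :=
  ∃ (L : (Fin n → ℝ) →ₗ[ℝ] (Fin d → ℝ)) (b : Fin d → ℝ), ∀ x, f x = L x + b

/-- The unique affine map with value `v0` at `0` and value `v i` at the `i`-th
standard basis vector. -/
noncomputable def affineFromValues {n d : ℕ} (v0 : Fin d → ℝ) (v : Fin n → Fin d → ℝ) :
    (Fin n → ℝ) → (Fin d → ℝ) :=
  fun x => v0 + ∑ i, x i • (v i - v0)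

open Module

/-!
Write `h = L + h 0` and let `V` be the coordinate subspace spanned by the face
`[0,1]^k × {0}`. Since the face has nonempty interior in `V`, injectivity of `h` on it makes `L`
injective on `V`. For every `x`, `h_η x - h 0 = L x' + ∑_{j ≥ k} x_j • (η_j - h 0)` with
`x' ∈ V`, and each piece of `K` lies in `h 0 + Y` for a subspace `Y ⊇ L V` of dimension at most
`(n - #{j ≥ k}) + m + 1 ≤ d - #{j ≥ k}`. Being linearly independent modulo such a `Y` is an open
dense condition on the family `(η_j - h 0)_{j ≥ k}`, and it forces every `x` with
`h_η x ∈ h 0 + Y` to have `x_j = 0` for `j ≥ k`, i.e. to lie in `V`. Applied to the pieces of `K`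
this gives the disjointness, and applied to `Y = L V` it reduces injectivity of `h_η` to that of
`L` on `V`.
-/

section LinearAlgebra

variable {K E : Type*} [Field K] [AddCommGroup E] [Module K E]

theorem Submodule.eq_zero_of_sum_smul_mem {ι : Type*} [Fintype ι] {Y : Submodule K E} {v : ι → E}
    (hv : LinearIndependent K fun j => Y.mkQ (v j)) {c : ι → K} (hc : ∑ j, c j • v j ∈ Y) :
    c = 0 := by
  have hc' : Y.mkQ (∑ j, c j • v j) = 0 := (Submodule.Quotient.mk_eq_zero Y).2 hc
  rw [map_sum] at hc'
  exact funext (Fintype.linearIndependent_iff.1 hv c (by simpa only [map_smul] using hc'))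

variable [FiniteDimensional K E]

theorem Submodule.finrank_sup_range_sup_span_singleton_le {m : ℕ} (Y : Submodule K E)
    (f : (Fin m → K) →ₗ[K] E) (v : E) :
    finrank K (Y ⊔ LinearMap.range f ⊔ Submodule.span K {v} : Submodule K E) ≤
      finrank K Y + m + 1 := by
  have hf : finrank K (LinearMap.range f) ≤ m := f.finrank_range_le.trans_eq (finrank_fin_fun K)
  have hv : finrank K (Submodule.span K {v}) ≤ 1 := (finrank_span_le_card {v}).trans (by simp)
  have h₁ := Submodule.finrank_add_le_finrank_add_finrank Y (LinearMap.range f)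
  have h₂ := Submodule.finrank_add_le_finrank_add_finrank (Y ⊔ LinearMap.range f)
    (Submodule.span K {v})
  omega

end LinearAlgebra

section Genericity

variable {𝕜 E : Type*} [NontriviallyNormedField 𝕜] [NormedAddCommGroup E] [NormedSpace 𝕜 E]

theorem Submodule.dense_compl_of_ne_top {Y : Submodule 𝕜 E} (hY : Y ≠ ⊤) :
    Dense (Yᶜ : Set E) := by
  rw [← interior_eq_empty_iff_dense_compl, ← not_nonempty_iff_eq_empty]
  exact fun h => hY (Y.eq_top_of_nonempty_interior' h)

variable [FiniteDimensional 𝕜 E]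

theorem Submodule.exists_dist_lt_linearIndependent_mkQ (Y : Submodule 𝕜 E) {r : ℕ}
    (hr : finrank 𝕜 Y + r ≤ finrank 𝕜 E) (f : Fin r → E) {ε : ℝ} (hε : 0 < ε) :
    ∃ g : Fin r → E, (∀ j, dist (g j) (f j) < ε) ∧ LinearIndependent 𝕜 (Y.mkQ ∘ g) := by
  induction r with
  | zero => exact ⟨f, finZeroElim, linearIndependent_empty_type⟩
  | succ r ih =>
    obtain ⟨g, hgf, hg⟩ := ih (by omega) (Fin.init f)
    have hW : Y ⊔ Submodule.span 𝕜 (range g) ≠ ⊤ := by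
      intro htop
      have hsup := Submodule.finrank_add_le_finrank_add_finrank Y (Submodule.span 𝕜 (range g))
      have hspan : finrank 𝕜 (Submodule.span 𝕜 (range g)) ≤ r :=
        (finrank_range_le_card g).trans_eq (Fintype.card_fin r)
      rw [htop, finrank_top] at hsup
      omega
    obtain ⟨v, hvW, hvf⟩ := (Submodule.dense_compl_of_ne_top hW).exists_mem_open
      Metric.isOpen_ball ⟨f (Fin.last r), Metric.mem_ball_self hε⟩
    refine ⟨Fin.snoc g v, fun j => ?_, ?_⟩
    · induction j using Fin.lastCases with
      | last => simpa using hvf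
      | cast j => simpa [Fin.init] using hgf j
    · rw [Fin.comp_snoc, linearIndependent_finSnoc, range_comp, ← Submodule.map_span,
        ← Submodule.mem_comap, Submodule.comap_map_mkQ]
      exact ⟨hg, hvW⟩

theorem Submodule.dense_setOf_linearIndependent_mkQ {ι : Type*} [Fintype ι] (Y : Submodule 𝕜 E)
    (hY : finrank 𝕜 Y + Fintype.card ι ≤ finrank 𝕜 E) :
    Dense {g : ι → E | LinearIndependent 𝕜 (Y.mkQ ∘ g)} := by
  let e := Fintype.equivFin ι
  refine Metric.dense_iff.2 fun f ε hε => ?_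
  obtain ⟨g, hgf, hg⟩ := Y.exists_dist_lt_linearIndependent_mkQ hY (f ∘ e.symm) hε
  refine ⟨g ∘ e, ?_, hg.comp e e.injective⟩
  rw [Metric.mem_ball, dist_pi_lt_iff hε]
  intro i
  simpa using hgf (e i)

variable [CompleteSpace 𝕜]

theorem Submodule.isOpen_setOf_linearIndependent_mkQ {ι : Type*} [Finite ι]
    (Y : Submodule 𝕜 E) : IsOpen {g : ι → E | LinearIndependent 𝕜 (Y.mkQ ∘ g)} := by
  have : IsClosed (Y : Set E) := Y.closed_of_finiteDimensional
  exact isOpen_setOfPred_linearIndependent.preimage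
    (continuous_pi fun j => Y.mkQ.continuous_of_finiteDimensional.comp (continuous_apply j))

theorem exists_isOpen_dense_forall_linearIndependent_mkQ {ι α : Type*} [Fintype ι] [Finite α]
    (Y : α → Submodule 𝕜 E) (hY : ∀ a, finrank 𝕜 (Y a) + Fintype.card ι ≤ finrank 𝕜 E) (p : E) :
    ∃ W : Set (ι → E), IsOpen W ∧ Dense W ∧
      ∀ η ∈ W, ∀ a, LinearIndependent 𝕜 fun j => (Y a).mkQ (η j - p) := by
  let T := Homeomorph.subRight (Function.const ι p)
  refine ⟨⋂ a, T ⁻¹' {g | LinearIndependent 𝕜 ((Y a).mkQ ∘ g)},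
    isOpen_iInter_of_finite fun a => (Y a).isOpen_setOf_linearIndependent_mkQ.preimage T.continuous,
    ?_, fun η hη a => mem_iInter.1 hη a⟩
  rw [← sInter_range]
  exact (finite_range _).dense_sInter
    (forall_mem_range.2 fun a => (Y a).isOpen_setOf_linearIndependent_mkQ.preimage T.continuous)
    (forall_mem_range.2 fun a => ((Y a).dense_setOf_linearIndependent_mkQ (hY a)).preimage
      T.isOpenMap)

end Genericity

section Face

variable {n : ℕ}

def faceSubmodule (n k : ℕ) : Submodule ℝ (Fin n → ℝ) where
  carrier := {x | ∀ i : Fin n, k ≤ (i : ℕ) → x i = 0}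
  add_mem' hx hy i hi := by simp [hx i hi, hy i hi]
  zero_mem' _ _ := rfl
  smul_mem' c x hx i hi := by simp [hx i hi]

variable {k : ℕ}

theorem mem_faceSubmodule {x : Fin n → ℝ} :
    x ∈ faceSubmodule n k ↔ ∀ i : Fin n, k ≤ (i : ℕ) → x i = 0 :=
  Iff.rfl

theorem faceSubmodule_eq_ker :
    faceSubmodule n k =
      LinearMap.ker (LinearMap.funLeft ℝ ℝ (Subtype.val : {i : Fin n // k ≤ (i : ℕ)} → Fin n)) := by
  ext x
  simp [mem_faceSubmodule, funext_iff]

theorem finrank_faceSubmodule_add_card :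
    finrank ℝ (faceSubmodule n k) + Fintype.card {i : Fin n // k ≤ (i : ℕ)} = n := by
  have hrange := LinearMap.range_eq_top.2 (LinearMap.funLeft_surjective_of_injective ℝ ℝ
    (Subtype.val : {i : Fin n // k ≤ (i : ℕ)} → Fin n) Subtype.val_injective)
  have := LinearMap.finrank_range_add_finrank_ker
    (LinearMap.funLeft ℝ ℝ (Subtype.val : {i : Fin n // k ≤ (i : ℕ)} → Fin n))
  rw [hrange, finrank_top, finrank_fin_fun, finrank_pi, ← faceSubmodule_eq_ker] at this
  omega

theorem finrank_map_faceSubmodule_add_card_le {F : Type*} [AddCommGroup F] [Module ℝ F]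
    (L : (Fin n → ℝ) →ₗ[ℝ] F) :
    finrank ℝ ((faceSubmodule n k).map L) + Fintype.card {i : Fin n // k ≤ (i : ℕ)} ≤ n := by
  have := Submodule.finrank_map_le L (faceSubmodule n k)
  have := finrank_faceSubmodule_add_card (n := n) (k := k)
  omega

theorem eq_zero_of_injOn_face {F : Type*} [AddCommGroup F] [Module ℝ F]
    {h : (Fin n → ℝ) → F} {L : (Fin n → ℝ) →ₗ[ℝ] F} (hL : ∀ x, h x = L x + h 0)
    (hinj : InjOn h
      {x : Fin n → ℝ | (∀ i, x i ∈ Icc (0 : ℝ) 1) ∧ ∀ i : Fin n, k ≤ (i : ℕ) → x i = 0})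
    {x : Fin n → ℝ} (hx : x ∈ faceSubmodule n k) (hLx : L x = 0) : x = 0 := by
  -- Move along `x` from the centre `p` of the face; a small enough step stays in the face.
  let p : Fin n → ℝ := fun i => if (i : ℕ) < k then 1 / 2 else 0
  have hstep : ∀ s : ℝ, |s| * ‖x‖ ≤ 1 / 2 →
      p + s • x ∈ {x : Fin n → ℝ | (∀ i, x i ∈ Icc (0 : ℝ) 1) ∧
        ∀ i : Fin n, k ≤ (i : ℕ) → x i = 0} := by
    intro s hs
    refine ⟨fun i => ?_, fun i hi => by simp [p, not_lt.2 hi, hx i hi]⟩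
    have hsx : |s * x i| ≤ 1 / 2 := by
      rw [abs_mul]
      exact le_trans (by gcongr; simpa using norm_le_pi_norm x i) hs
    by_cases hik : (i : ℕ) < k
    · simp only [Pi.add_apply, Pi.smul_apply, smul_eq_mul, p, if_pos hik]
      constructor <;> linarith [abs_le.1 hsx]
    · simp [p, hik, hx i (not_lt.1 hik)]
  set t : ℝ := (2 * (‖x‖ + 1))⁻¹
  have ht : 0 < t := by positivity
  have htx : |t| * ‖x‖ ≤ 1 / 2 := by
    rw [abs_of_pos ht, inv_mul_le_iff₀ (by positivity)]
    linarith [norm_nonneg x]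
  have hpt : h (p + t • x) = h (p + (0 : ℝ) • x) := by
    rw [hL, hL (p + _), map_add, map_add, map_smul, map_smul, hLx, smul_zero, smul_zero]
  have := hinj (hstep t htx) (hstep 0 (by simp)) hpt
  rw [zero_smul, add_zero, add_eq_left, smul_eq_zero] at this
  exact this.resolve_left ht.ne'

end Face

theorem affineFromValues_sub_affineFromValues {n d : ℕ} (v0 : Fin d → ℝ)
    (v : Fin n → Fin d → ℝ) (x y : Fin n → ℝ) :
    affineFromValues v0 v x - affineFromValues v0 v y = affineFromValues v0 v (x - y) - v0 := by
  simp only [affineFromValues, Pi.sub_apply, sub_smul, Finset.sum_sub_distrib]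
  abel

noncomputable def perturbedMap {n d : ℕ} (h : (Fin n → ℝ) → (Fin d → ℝ)) (k : ℕ)
    (η : {i : Fin n // k ≤ (i : ℕ)} → Fin d → ℝ) : (Fin n → ℝ) → (Fin d → ℝ) :=
  affineFromValues (h 0) fun i : Fin n =>
    if hi : (i : ℕ) < k then h (Pi.single i 1) else η ⟨i, Nat.le_of_not_lt hi⟩

section Perturbation

variable {n d k : ℕ} {h : (Fin n → ℝ) → (Fin d → ℝ)} {L : (Fin n → ℝ) →ₗ[ℝ] (Fin d → ℝ)}

theorem perturbedMap_sub_eq (hL : ∀ x, h x = L x + h 0)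
    (η : {i : Fin n // k ≤ (i : ℕ)} → Fin d → ℝ) (x : Fin n → ℝ) :
    perturbedMap h k η x - h 0 =
      L (fun i => if k ≤ (i : ℕ) then 0 else x i) +
        ∑ j : {i : Fin n // k ≤ (i : ℕ)}, x j • (η j - h 0) := by
  rw [perturbedMap, affineFromValues, add_sub_cancel_left,
    ← Fintype.sum_subtype_add_sum_subtype (fun i : Fin n => k ≤ (i : ℕ)), add_comm,
    L.pi_apply_eq_sum_univ, ← Fintype.sum_subtype_add_sum_subtype (fun i : Fin n => k ≤ (i : ℕ))]
  congr 1
  · symm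
    rw [Finset.sum_eq_zero fun i _ => by rw [if_pos i.2, zero_smul], zero_add]
    refine Finset.sum_congr rfl fun i _ => ?_
    rw [if_neg i.2, dif_pos (not_le.1 i.2), hL, add_sub_cancel_right]
    congr 2
    ext j
    simp [Pi.single_apply, eq_comm]
  · refine Finset.sum_congr rfl fun j _ => ?_
    rw [dif_neg (not_lt.2 j.2)]

theorem perturbedMap_eq_of_mem (hL : ∀ x, h x = L x + h 0)
    (η : {i : Fin n // k ≤ (i : ℕ)} → Fin d → ℝ) {x : Fin n → ℝ} (hx : x ∈ faceSubmodule n k) :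
    perturbedMap h k η x = h x := by
  have hy : (fun i : Fin n => if k ≤ (i : ℕ) then 0 else x i) = x :=
    funext fun i => by split_ifs with hi; exacts [(hx i hi).symm, rfl]
  have := perturbedMap_sub_eq hL η x
  rw [hy, Finset.sum_eq_zero fun j _ => by rw [hx j j.2, zero_smul], add_zero,
    sub_eq_iff_eq_add] at this
  rw [this, hL x]

theorem mem_faceSubmodule_of_perturbedMap_sub_mem (hL : ∀ x, h x = L x + h 0)
    {Y : Submodule ℝ (Fin d → ℝ)} (hY : (faceSubmodule n k).map L ≤ Y)
    {η : {i : Fin n // k ≤ (i : ℕ)} → Fin d → ℝ}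
    (hη : LinearIndependent ℝ fun j => Y.mkQ (η j - h 0)) {x : Fin n → ℝ}
    (hx : perturbedMap h k η x - h 0 ∈ Y) : x ∈ faceSubmodule n k := by
  rw [perturbedMap_sub_eq hL] at hx
  have hy : L (fun i => if k ≤ (i : ℕ) then 0 else x i) ∈ Y :=
    hY ⟨_, fun i hi => if_pos hi, rfl⟩
  have hfree := Submodule.eq_zero_of_sum_smul_mem hη ((Y.add_mem_iff_right hy).1 hx)
  exact fun i hi => congrFun hfree ⟨i, hi⟩

theorem perturbedMap_injective (hL : ∀ x, h x = L x + h 0)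
    (hinj : InjOn h
      {x : Fin n → ℝ | (∀ i, x i ∈ Icc (0 : ℝ) 1) ∧ ∀ i : Fin n, k ≤ (i : ℕ) → x i = 0})
    {η : {i : Fin n // k ≤ (i : ℕ)} → Fin d → ℝ}
    (hη : LinearIndependent ℝ fun j => ((faceSubmodule n k).map L).mkQ (η j - h 0)) :
    Function.Injective (perturbedMap h k η) := by
  intro x y hxy
  have hz : perturbedMap h k η (x - y) - h 0 = 0 := by
    rw [perturbedMap, ← affineFromValues_sub_affineFromValues]
    exact sub_eq_zero.2 hxy
  have hzV := mem_faceSubmodule_of_perturbedMap_sub_mem hL le_rfl hη (hz ▸ zero_mem _)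
  rw [sub_eq_zero, perturbedMap_eq_of_mem hL η hzV, hL, add_eq_right] at hz
  exact sub_eq_zero.1 (eq_zero_of_injOn_face hL hinj hzV hz)

theorem mem_faceSubmodule_of_perturbedMap_eq {m : ℕ} (hL : ∀ x, h x = L x + h 0)
    {g : (Fin m → ℝ) → Fin d → ℝ} {Lg : (Fin m → ℝ) →ₗ[ℝ] Fin d → ℝ} {bg : Fin d → ℝ}
    (hg : ∀ s, g s = Lg s + bg) {η : {i : Fin n // k ≤ (i : ℕ)} → Fin d → ℝ}
    (hη : LinearIndependent ℝ fun j =>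
      ((faceSubmodule n k).map L ⊔ LinearMap.range Lg ⊔ Submodule.span ℝ {bg - h 0}).mkQ
        (η j - h 0))
    {x : Fin n → ℝ} {s : Fin m → ℝ} (hxs : perturbedMap h k η x = g s) :
    x ∈ faceSubmodule n k := by
  refine mem_faceSubmodule_of_perturbedMap_sub_mem hL (le_sup_left.trans le_sup_left) hη ?_
  rw [hxs, hg, add_sub_assoc]
  exact add_mem (Submodule.mem_sup_left (Submodule.mem_sup_right (LinearMap.mem_range_self _ s)))
    (Submodule.mem_sup_right (Submodule.mem_span_singleton_self _))

end Perturbation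

theorem affine_transversality_general
    (m n d k : ℕ) (hmnd : m + n + 1 ≤ d)
    (K : Set (Fin d → ℝ))
    (hK : ∃ (N : ℕ) (g : Fin N → (Fin m → ℝ) → (Fin d → ℝ))
      (S : Fin N → Set (Fin m → ℝ)),
      (∀ i, IsAffineMapR (g i)) ∧ K = ⋃ i, g i '' S i)
    (h : (Fin n → ℝ) → (Fin d → ℝ)) (haff : IsAffineMapR h)
    (hinj : Set.InjOn h
      {x : Fin n → ℝ | (∀ i, x i ∈ Icc (0 : ℝ) 1) ∧ ∀ i : Fin n, k ≤ (i : ℕ) → x i = 0}) :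
    ∃ W : Set ({i : Fin n // k ≤ (i : ℕ)} → Fin d → ℝ), IsOpen W ∧ Dense W ∧
      ∀ η ∈ W,
        Function.Injective
          (affineFromValues (h 0) (fun i : Fin n =>
            if hi : (i : ℕ) < k then h (Pi.single i 1)
            else η ⟨i, Nat.le_of_not_lt hi⟩)) ∧
        (affineFromValues (h 0) (fun i : Fin n =>
            if hi : (i : ℕ) < k then h (Pi.single i 1)
            else η ⟨i, Nat.le_of_not_lt hi⟩)) ''
          ({x : Fin n → ℝ | ∀ i, x i ∈ Icc (0 : ℝ) 1} \
           {x : Fin n → ℝ | (∀ i, x i ∈ Icc (0 : ℝ) 1) ∧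
              ∀ i : Fin n, k ≤ (i : ℕ) → x i = 0}) ∩ K = ∅ := by
  obtain ⟨N, g, S, hg, rfl⟩ := hK
  obtain ⟨L, b, hLb⟩ := haff
  have hL : ∀ x, h x = L x + h 0 := fun x => by rw [hLb x, hLb 0, map_zero, zero_add]
  choose Lg bg hLg using hg
  let Y₀ := (faceSubmodule n k).map L
  let Y : Option (Fin N) → Submodule ℝ (Fin d → ℝ) := fun o =>
    o.elim Y₀ fun i => Y₀ ⊔ LinearMap.range (Lg i) ⊔ Submodule.span ℝ {bg i - h 0}
  have hY₀ : finrank ℝ Y₀ + Fintype.card {i : Fin n // k ≤ (i : ℕ)} ≤ n :=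
    finrank_map_faceSubmodule_add_card_le L
  have hY : ∀ o, finrank ℝ (Y o) + Fintype.card {i : Fin n // k ≤ (i : ℕ)} ≤
      finrank ℝ (Fin d → ℝ) := by
    rw [finrank_fin_fun]
    rintro (_ | i)
    · exact hY₀.trans (by omega)
    · have := Y₀.finrank_sup_range_sup_span_singleton_le (Lg i) (bg i - h 0)
      change finrank ℝ (Y₀ ⊔ _ ⊔ _ : Submodule ℝ (Fin d → ℝ)) + _ ≤ d
      omega
  obtain ⟨W, hWo, hWd, hW⟩ := exists_isOpen_dense_forall_linearIndependent_mkQ Y hY (h 0)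
  refine ⟨W, hWo, hWd, fun η hη => ⟨perturbedMap_injective hL hinj (hW η hη none), ?_⟩⟩
  refine eq_empty_iff_forall_notMem.2 ?_
  rintro _ ⟨⟨x, ⟨hx, hxface⟩, rfl⟩, hxK⟩
  obtain ⟨i, s, -, hs⟩ := mem_iUnion.1 hxK
  exact hxface ⟨hx, mem_faceSubmodule_of_perturbedMap_eq hL (hLg i) (hW η hη (some i)) hs.symm⟩

/-- Affine transversality: given `m + n + 1 ≤ d`, `k ≤ n`, a set `K ⊆ ℝ^d` which is a
finite union of affine images of subsets of `ℝ^m`, and an affine map `h : ℝⁿ → ℝ^d`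
injective on `[0,1]^k × {0}`, the set of parameters `η` (prescribing the values of
an affine perturbation `h_η` at the basis vectors `ξ_{k+1}, …, ξ_n`) for which `h_η`
is injective and `h_η([0,1]ⁿ \ ([0,1]^k × {0})) ∩ K = ∅` contains a dense open set. -/
theorem affine_transversality
    (m n d k : ℕ) (hmnd : m + n + 1 ≤ d) (hkn : k ≤ n)
    (K : Set (Fin d → ℝ))
    (hK : ∃ (N : ℕ) (g : Fin N → (Fin m → ℝ) → (Fin d → ℝ))
      (S : Fin N → Set (Fin m → ℝ)),
      (∀ i, IsAffineMapR (g i)) ∧ K = ⋃ i, g i '' S i)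
    (h : (Fin n → ℝ) → (Fin d → ℝ)) (haff : IsAffineMapR h)
    (hinj : Set.InjOn h
      {x : Fin n → ℝ | (∀ i, x i ∈ Icc (0 : ℝ) 1) ∧ ∀ i : Fin n, k ≤ (i : ℕ) → x i = 0}) :
    ∃ W : Set ({i : Fin n // k ≤ (i : ℕ)} → Fin d → ℝ), IsOpen W ∧ Dense W ∧
      ∀ η ∈ W,
        Function.Injective
          (affineFromValues (h 0) (fun i : Fin n =>
            if hi : (i : ℕ) < k then h (Pi.single i 1)
            else η ⟨i, Nat.le_of_not_lt hi⟩)) ∧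
        (affineFromValues (h 0) (fun i : Fin n =>
            if hi : (i : ℕ) < k then h (Pi.single i 1)
            else η ⟨i, Nat.le_of_not_lt hi⟩)) ''
          ({x : Fin n → ℝ | ∀ i, x i ∈ Icc (0 : ℝ) 1} \
           {x : Fin n → ℝ | (∀ i, x i ∈ Icc (0 : ℝ) 1) ∧
              ∀ i : Fin n, k ≤ (i : ℕ) → x i = 0}) ∩ K = ∅ :=
  affine_transversality_general m n d k hmnd K hK h haff hinj
end
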